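/- arXiv:1407.3139 — 10 statements merged into one kernel-verified Lean document; each statement's English description precedes it below -/
import Mathlib

section
/- Let (x, y, h) be an sl2-triple of N×N complex matrices. Then the space of all N×N complex matrices decomposes as the direct sum of the kernel of ad y and the image of ad x; that is, Ker(ad y) ∩ Im(ad x) = {0} and Ker(ad y) + Im(ad x) is the whole space of N×N complex matrices. -/
/-!
In a finite-dimensional `sl₂`-module `M` (here the matrices under `ad`), `ker f ⊓ range e = ⊥`.
An `h`-eigenvector `v` in this intersection is a lowest weight vector, so its weight is `-n` with
`n ∈ ℕ`. Write `v = e u` with `u` in the generalized `h`-weight space of weight `-n - 2`. As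
`f (e u) = 0`, the string formula `e f^(k+1) u = (k + 1) (h + k) f^k u` holds; since `f` lowers
generalized weights by `2`, the last nonzero `f^k u` would be an eigenvector of weight `-k` lying in
the generalized weight space of weight `-n - 2 - 2k`, which is impossible, so `u = 0`.
The same argument for the triple `(-h, f, e)` gives `ker e ⊓ range f = ⊥`, and rank–nullity turns
the two disjointness statements into `M = ker f ⊕ range e`.
-/

noncomputable def ad (N : ℕ) (z : Matrix (Fin N) (Fin N) ℂ) :
    Matrix (Fin N) (Fin N) ℂ →ₗ[ℂ] Matrix (Fin N) (Fin N) ℂ :=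
  LinearMap.mulLeft ℂ z - LinearMap.mulRight ℂ z

open LieModule Module

lemma Module.End.mapsTo_maxGenEigenspace_of_mul_sub_eq {R M : Type*} [CommRing R]
    [AddCommGroup M] [Module R M] {E A B : End R M} {α β : R}
    (hE : E * (A - α • 1) = (B - β • 1) * E) :
    Set.MapsTo E (A.maxGenEigenspace α) (B.maxGenEigenspace β) := by
  rintro u hu
  obtain ⟨k, hk⟩ := (A.mem_maxGenEigenspace α u).mp hu
  refine (B.mem_maxGenEigenspace β _).mpr ⟨k, ?_⟩
  rw [← End.mul_apply, ← (SemiconjBy.pow_right hE k).eq, End.mul_apply, hk, map_zero]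

section FiniteDimensional

variable {K V : Type*} [Field K] [AddCommGroup V] [Module K V] [FiniteDimensional K V]

/- Split `u₀` along the Fitting decomposition of `A - α`; `E` maps the range component into
`range (B - β) ^ m ⊓ ker (B - β) ^ m = ⊥`. -/
lemma Module.End.exists_mem_maxGenEigenspace_apply_eq {E A B : End K V} {α β : K}
    (hE : E * (A - α • 1) = (B - β • 1) * E) {u₀ : V} (hv : B (E u₀) = β • E u₀) :
    ∃ u ∈ A.maxGenEigenspace α, E u = E u₀ := by
  obtain ⟨m, hm, hA, hB⟩ := ((Filter.eventually_ge_atTop 1).and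
    ((A - α • 1).eventually_isCompl_ker_pow_range_pow.and
      (B - β • 1).eventually_isCompl_ker_pow_range_pow)).exists
  have hEpow := (SemiconjBy.pow_right hE m).eq
  obtain ⟨u, w, hu, ⟨z, rfl⟩, hu₀⟩ :=
    Submodule.codisjoint_iff_exists_add_eq.mp hA.codisjoint u₀
  refine ⟨u, (A.mem_maxGenEigenspace α u).mpr ⟨m, hu⟩, ?_⟩
  have hEw_range : E (((A - α • 1) ^ m) z) ∈ LinearMap.range ((B - β • 1) ^ m) :=
    ⟨E z, by rw [← End.mul_apply, ← hEpow, End.mul_apply]⟩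
  have hEu_ker : E u ∈ LinearMap.ker ((B - β • 1) ^ m) := by
    rw [LinearMap.mem_ker, ← End.mul_apply, ← hEpow, End.mul_apply, hu, map_zero]
  have hv_ker : E u₀ ∈ LinearMap.ker ((B - β • 1) ^ m) := by
    rw [LinearMap.mem_ker, ← Nat.sub_add_cancel hm, pow_succ, End.mul_apply]
    simp [hv]
  have hEw_ker : E (((A - α • 1) ^ m) z) ∈ LinearMap.ker ((B - β • 1) ^ m) := by
    simpa [← hu₀] using sub_mem hv_ker hEu_ker
  rw [← hu₀, map_add, Submodule.disjoint_def.mp hB.disjoint _ hEw_ker hEw_range, add_zero]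

lemma Module.End.exists_not_disjoint_eigenspace_of_ne_bot [IsAlgClosed K] {A : End K V}
    {W : Submodule K V} (hW : W ≠ ⊥) (hA : ∀ w ∈ W, A w ∈ W) :
    ∃ μ, ¬ Disjoint (A.eigenspace μ) W := by
  have : Nontrivial W := Submodule.nontrivial_iff_ne_bot.mpr hW
  obtain ⟨μ, hμ⟩ := End.exists_eigenvalue (A.restrict hA)
  exact ⟨μ, fun hd ↦ hμ (End.eigenspace_restrict_eq_bot hA hd)⟩

lemma LinearMap.isCompl_ker_range_of_disjoint {E F : End K V}
    (h₁ : Disjoint (ker F) (range E)) (h₂ : Disjoint (ker E) (range F)) :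
    IsCompl (ker F) (range E) := by
  refine (Submodule.isCompl_iff_disjoint _ _ ?_).mpr h₁
  have := Submodule.finrank_add_finrank_le_of_disjoint h₂
  have := E.finrank_range_add_finrank_ker
  have := F.finrank_range_add_finrank_ker
  omega

end FiniteDimensional

namespace IsSl2Triple

variable {K L M : Type*} [Field K] [LieRing L] [LieAlgebra K L] [AddCommGroup M] [Module K M]
  [LieRingModule L M] [LieModule K L M] {h e f : L}

lemma toEnd_e_mul_sub (t : IsSl2Triple h e f) (μ : K) :
    toEnd K L M e * (toEnd K L M h - μ • 1) = (toEnd K L M h - (μ + 2) • 1) * toEnd K L M e := by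
  ext m
  simp only [End.mul_apply, LinearMap.sub_apply, toEnd_apply_apply, LinearMap.smul_apply,
    End.one_apply, lie_sub, lie_smul, leibniz_lie h e m, t.lie_h_e_smul K, smul_lie]
  module

lemma toEnd_f_mul_sub (t : IsSl2Triple h e f) (μ : K) :
    toEnd K L M f * (toEnd K L M h - μ • 1) = (toEnd K L M h - (μ - 2) • 1) * toEnd K L M f := by
  ext m
  simp only [End.mul_apply, LinearMap.sub_apply, toEnd_apply_apply, LinearMap.smul_apply,
    End.one_apply, lie_sub, lie_smul, leibniz_lie h f m, t.lie_lie_smul_f K, neg_lie, smul_lie]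
  module

lemma lie_e_pow_succ_toEnd_f_of_lie_f_lie_e_eq_zero (t : IsSl2Triple h e f) {u : M}
    (hu : ⁅f, ⁅e, u⁆⁆ = 0) (k : ℕ) :
    ⁅e, (toEnd K L M f ^ (k + 1)) u⁆ =
      ((k : K) + 1) • (⁅h, (toEnd K L M f ^ k) u⁆ + (k : K) • (toEnd K L M f ^ k) u) := by
  induction k with
  | zero => simp [leibniz_lie e f u, t.lie_e_f, hu]
  | succ k ih =>
    rw [pow_succ', Module.End.mul_apply, toEnd_apply_apply, leibniz_lie e, t.lie_e_f, ih,
      lie_smul, lie_add, lie_smul, leibniz_lie f h, ← lie_skew f h, t.lie_lie_smul_f K]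
    simp only [toEnd_apply_apply, pow_succ', Module.End.mul_apply, neg_neg, smul_lie]
    push_cast
    module

variable [FiniteDimensional K M]

lemma eq_zero_of_mem_maxGenEigenspace_of_lie_f_lie_e_eq_zero [CharZero K]
    (t : IsSl2Triple h e f) {u : M} {ν : K} (hu : u ∈ (toEnd K L M h).maxGenEigenspace ν)
    (hν : ∀ k : ℕ, ν ≠ k) (hfe : ⁅f, ⁅e, u⁆⁆ = 0) : u = 0 := by
  set F := toEnd K L M f
  set H := toEnd K L M h
  have hmem (k : ℕ) : (F ^ k) u ∈ H.maxGenEigenspace (ν - 2 * k) := by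
    induction k with
    | zero => simpa using hu
    | succ k ih =>
      rw [pow_succ', Module.End.mul_apply]
      have := End.mapsTo_maxGenEigenspace_of_mul_sub_eq (t.toEnd_f_mul_sub (ν - 2 * k)) ih
      rwa [show ν - 2 * k - 2 = ν - 2 * ((k + 1 : ℕ) : K) by push_cast; ring] at this
  have hterm : ∃ n, (F ^ n) u = 0 := by
    by_contra! hne
    refine Set.infinite_range_of_injective (f := fun k : ℕ ↦ ν - 2 * k) (fun a b hab ↦ ?_)
      (H.finite_hasEigenvalue.subset ?_)
    · simpa using hab
    · rintro _ ⟨k, rfl⟩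
      refine End.HasUnifEigenvalue.lt zero_lt_one (k := ⊤) fun hbot ↦ hne k ?_
      simpa [hbot] using hmem k
  have hstep (k : ℕ) (hk : (F ^ (k + 1)) u = 0) : (F ^ k) u = 0 := by
    have hstring := t.lie_e_pow_succ_toEnd_f_of_lie_f_lie_e_eq_zero (K := K) hfe k
    rw [hk, lie_zero, eq_comm, smul_eq_zero_iff_right (Nat.cast_add_one_ne_zero k),
      add_eq_zero_iff_eq_neg, ← neg_smul] at hstring
    refine Submodule.disjoint_def.mp (End.disjoint_genEigenspace H (μ₁ := ν - 2 * k)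
      (μ₂ := -k) ?_ ⊤ 1) _ (hmem k) ?_
    · exact fun heq ↦ hν k (by linear_combination heq)
    · simpa [End.mem_eigenspace_iff, H, F] using hstring
  obtain ⟨n, hn⟩ := hterm
  induction n with
  | zero => simpa using hn
  | succ n ih => exact ih (hstep n hn)

theorem disjoint_ker_toEnd_f_range_toEnd_e [CharZero K] [IsAlgClosed K] (t : IsSl2Triple h e f) :
    Disjoint (LinearMap.ker (toEnd K L M f)) (LinearMap.range (toEnd K L M e)) := by
  rw [disjoint_iff]
  by_contra hW
  have hWinv : ∀ w ∈ LinearMap.ker (toEnd K L M f) ⊓ LinearMap.range (toEnd K L M e),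
      toEnd K L M h w ∈ LinearMap.ker (toEnd K L M f) ⊓ LinearMap.range (toEnd K L M e) := by
    rintro _ ⟨hwF, z, rfl⟩
    simp only [SetLike.mem_coe, LinearMap.mem_ker, toEnd_apply_apply] at hwF
    refine ⟨?_, ⁅h, z⁆ + (2 : K) • z, ?_⟩
    · rw [SetLike.mem_coe, LinearMap.mem_ker, toEnd_apply_apply, toEnd_apply_apply,
        toEnd_apply_apply, leibniz_lie f h, ← lie_skew f h, t.lie_lie_smul_f K, hwF]
      simp [hwF]
    · simp [leibniz_lie h e z, t.lie_h_e_smul K, add_comm]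
  obtain ⟨μ, hμ⟩ := End.exists_not_disjoint_eigenspace_of_ne_bot hW hWinv
  rw [Submodule.disjoint_def] at hμ
  push Not at hμ
  obtain ⟨_, hvH, ⟨hvF, u₀, rfl⟩, hv0⟩ := hμ
  rw [End.mem_eigenspace_iff] at hvH
  have hprim : t.symm.HasPrimitiveVectorWith (toEnd K L M e u₀) (-μ) :=
    ⟨hv0, by simpa using hvH, hvF⟩
  obtain ⟨n, hn⟩ := hprim.exists_nat
  obtain ⟨u, hu, hEu⟩ := End.exists_mem_maxGenEigenspace_apply_eq (t.toEnd_e_mul_sub (μ - 2))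
    (by rwa [sub_add_cancel])
  have hu0 : u = 0 := by
    refine t.eq_zero_of_mem_maxGenEigenspace_of_lie_f_lie_e_eq_zero hu (fun k hk ↦ ?_) ?_
    · have : ((n + k + 2 : ℕ) : K) = 0 := by push_cast; linear_combination -hn - hk
      exact absurd (Nat.cast_eq_zero.mp this) (by omega)
    · rw [← hEu] at hvF
      simpa using hvF
  exact hv0 (by rw [← hEu, hu0, map_zero])

theorem isCompl_ker_toEnd_f_range_toEnd_e [CharZero K] [IsAlgClosed K] (t : IsSl2Triple h e f) :
    IsCompl (LinearMap.ker (toEnd K L M f)) (LinearMap.range (toEnd K L M e)) :=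
  LinearMap.isCompl_ker_range_of_disjoint t.disjoint_ker_toEnd_f_range_toEnd_e
    t.symm.disjoint_ker_toEnd_f_range_toEnd_e

end IsSl2Triple

attribute [local instance] LieRing.ofAssociativeRing

lemma ad_eq_toEnd (N : ℕ) (z : Matrix (Fin N) (Fin N) ℂ) :
    ad N z = toEnd ℂ (Matrix (Fin N) (Fin N) ℂ) (Matrix (Fin N) (Fin N) ℂ) z := by
  ext w : 1
  simp [ad, Ring.lie_def]

/-- for an sl2-triple (x,y,h) of N×N complex matrices, the space of
N×N matrices is the direct sum of `Ker (ad y)` and `Im (ad x)`. -/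
theorem stmt1 (N : ℕ) (x y h : Matrix (Fin N) (Fin N) ℂ)
    (h1 : x * y - y * x = h)
    (h2 : h * x - x * h = (2 : ℂ) • x)
    (h3 : h * y - y * h = (-2 : ℂ) • y) :
    LinearMap.ker (ad N y) ⊓ LinearMap.range (ad N x) = ⊥ ∧
      LinearMap.ker (ad N y) ⊔ LinearMap.range (ad N x) = ⊤ := by
  suffices hc : IsCompl (LinearMap.ker (ad N y)) (LinearMap.range (ad N x)) from
    ⟨hc.inf_eq_bot, hc.sup_eq_top⟩
  by_cases hh : h = 0
  · have hx : x = 0 := by simpa [hh] using h2.symm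
    have hy : y = 0 := by simpa [hh] using h3.symm
    have had0 : ad N 0 = 0 := by ext; simp [ad]
    simpa [hx, hy, had0] using isCompl_top_bot
  · have t : IsSl2Triple h x y :=
      ⟨hh, by rw [Ring.lie_def, h1], by rw [Ring.lie_def, h2, two_smul, two_smul],
        by rw [Ring.lie_def, h3]; module⟩
    simpa only [ad_eq_toEnd] using t.isCompl_ker_toEnd_f_range_toEnd_e
end

section
/- A point m ∈ Λ(v,w) is 𝟏-semistable if and only if m satisfies the subspace condition: for any linear subspaces S_j ⊆ V_j (j = 1,…,n) such that Im Γ_j ⊆ S_j for all j, A_i(S_i) ⊆ S_{i+1} for all i, and B_i(S_{i+1}) ⊆ S_i for all i, one has S_j = V_j for all j. -/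
/-- The double quiver representation space `M(v,w)` for the type-A framed quiver, with
vertices indexed by `ℕ` (faithfully modelling vertices `1, …, n` by requiring the
dimension vectors to vanish at `0` and beyond `n`).  A point consists of the matrices of
the maps `A_i : V_i → V_{i+1}`, `B_i : V_{i+1} → V_i`, `Γ_j : W_j → V_j`,
`Δ_j : V_j → W_j`. -/
abbrev Mvw (v w : ℕ → ℕ) : Type :=
  ((i : ℕ) → Matrix (Fin (v (i + 1))) (Fin (v i)) ℂ) ×
  ((i : ℕ) → Matrix (Fin (v i)) (Fin (v (i + 1))) ℂ) ×
  ((j : ℕ) → Matrix (Fin (v j)) (Fin (w j)) ℂ) ×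
  ((j : ℕ) → Matrix (Fin (w j)) (Fin (v j)) ℂ)

/-- The group `G_v = ∏_i GL(V_i)`, with `GL(V_i)` realized as the units of the matrix
ring. -/
abbrev Gv (v : ℕ → ℕ) : Type := (i : ℕ) → (Matrix (Fin (v i)) (Fin (v i)) ℂ)ˣ

/-- The action of `G_v` on `M(v,w)`:
`(g_i) · (A_i, B_i, Γ_j, Δ_j) = (g_{i+1} A_i g_i⁻¹, g_i B_i g_{i+1}⁻¹, g_j Γ_j, Δ_j g_j⁻¹)`. -/
noncomputable def actGv {v w : ℕ → ℕ} (g : Gv v) (m : Mvw v w) : Mvw v w :=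
  (fun i => (g (i + 1)).val * m.1 i * (g i)⁻¹.val,
   fun i => (g i).val * m.2.1 i * (g (i + 1))⁻¹.val,
   fun j => (g j).val * m.2.2.1 j,
   fun j => m.2.2.2 j * (g j)⁻¹.val)

/-- `moment m i` is the component of the moment map `μ` at the vertex `i+1`:
`Γ_{i+1} Δ_{i+1} + A_i B_i − B_{i+1} A_{i+1}` (an endomorphism of `V_{i+1}`). -/
noncomputable def moment {v w : ℕ → ℕ} (m : Mvw v w) (i : ℕ) :
    Matrix (Fin (v (i + 1))) (Fin (v (i + 1))) ℂ :=
  m.2.2.1 (i + 1) * m.2.2.2 (i + 1) + m.1 i * m.2.1 i - m.2.1 (i + 1) * m.1 (i + 1)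

/-- A point is in `Λ(v,w) = μ⁻¹(0)` iff all components of the moment map vanish. -/
def inLambda {v w : ℕ → ℕ} (m : Mvw v w) : Prop := ∀ i, moment m i = 0

/-- The subspace condition: any family of subspaces `S_j ⊆ V_j` containing the images of
the `Γ_j` and stable under the `A_i` and `B_i` must be the whole family `(V_j)`. -/
def SubCond {v w : ℕ → ℕ} (m : Mvw v w) : Prop :=
  ∀ S : (j : ℕ) → Submodule ℂ (Fin (v j) → ℂ),
    (∀ j, LinearMap.range (m.2.2.1 j).mulVecLin ≤ S j) →
    (∀ i, Submodule.map (m.1 i).mulVecLin (S i) ≤ S (i + 1)) →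
    (∀ i, Submodule.map (m.2.1 i).mulVecLin (S (i + 1)) ≤ S i) →
    ∀ j, S j = ⊤

/-- Index type for the matrix-entry coordinates on `M(v,w)`. -/
def CoordIdx (v w : ℕ → ℕ) : Type :=
  ((i : ℕ) × (Fin (v (i + 1)) × Fin (v i))) ⊕
  (((i : ℕ) × (Fin (v i) × Fin (v (i + 1)))) ⊕
  (((j : ℕ) × (Fin (v j) × Fin (w j))) ⊕
  ((j : ℕ) × (Fin (w j) × Fin (v j)))))

/-- The coordinates (matrix entries) of a point of `M(v,w)`. -/
def coords {v w : ℕ → ℕ} (m : Mvw v w) : CoordIdx v w → ℂ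
  | Sum.inl ⟨i, p⟩ => m.1 i p.1 p.2
  | Sum.inr (Sum.inl ⟨i, p⟩) => m.2.1 i p.1 p.2
  | Sum.inr (Sum.inr (Sum.inl ⟨j, p⟩)) => m.2.2.1 j p.1 p.2
  | Sum.inr (Sum.inr (Sum.inr ⟨j, p⟩)) => m.2.2.2 j p.1 p.2

/-- `𝟏`-semistability of a point of `Λ(v,w)`: there is a polynomial function `F` on
`M(v,w)` (a polynomial in the matrix entries) and `k ≥ 1` such that
`F(g·m') = (∏_i det g_i)^k · F(m')` for all `g ∈ G_v` and all `m' ∈ Λ(v,w)`, and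
`F(m) ≠ 0`.  (The product of determinants over `i ≤ n` is the character `𝟏 = (1,…,1)`;
the factor at `i = 0` is trivial since `v 0 = 0`.) -/
noncomputable def OneSemistable (n : ℕ) {v w : ℕ → ℕ} (m : Mvw v w) : Prop :=
  ∃ k : ℕ, 1 ≤ k ∧ ∃ P : MvPolynomial (CoordIdx v w) ℂ,
    (∀ g : Gv v, ∀ m' : Mvw v w, inLambda m' →
      MvPolynomial.eval (coords (actGv g m')) P =
        (∏ i ∈ Finset.range (n + 1), ((g i).val).det) ^ k *
          MvPolynomial.eval (coords m') P) ∧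
    MvPolynomial.eval (coords m) P ≠ 0

/-!
If the subspace condition holds, the vectors obtained from the columns of the `Γ_j` by applying
words in the `A_i` and `B_i` span every `V_j`. Choosing `v_j` of them that form an invertible
matrix, the product over `j` of these determinants is a polynomial `F` with `F(m) ≠ 0`, and it
transforms by `∏ det g_j` because each such vector at the vertex `j` is moved by `g_j`.

Conversely, let `S_j` be a stable family with some `S_{j₀} ≠ V_{j₀}` and choose complements
`C_j`. The one-parameter subgroup `λ(t)` fixing the `S_j` and scaling the `C_j` by `t` has
`∏ det λ(t⁻¹) = t^(-c)` with `c = ∑ dim C_j > 0`, while stability makes `λ(t⁻¹) · m` affine in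
`t`. A relative invariant `F` of weight `k` then satisfies `t^(ck) F(λ(t⁻¹) · m) = F(m)` for
`t ≠ 0`; the left side is a polynomial in `t` vanishing at `0`, so `F(m) = 0`.
-/

namespace Submodule

variable {K E : Type*} [Field K] [AddCommGroup E] [Module K E] {p q : Submodule K E}

theorem det_projection_add_smul_projection [FiniteDimensional K E] (h : IsCompl p q) (t : K) :
    LinearMap.det (p.projection q h + t • q.projection p h.symm) = t ^ Module.finrank K q := by
  let e := p.prodEquivOfIsCompl q h
  have hconj : p.projection q h + t • q.projection p h.symm =
      (e : p × q →ₗ[K] E) ∘ₗ LinearMap.id.prodMap (t • LinearMap.id) ∘ₗ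
        (e.symm : E →ₗ[K] p × q) := by
    ext x
    obtain ⟨⟨y, z⟩, rfl⟩ := e.surjective x
    simp [e]
  rw [hconj, LinearMap.det_conj, LinearMap.det_prodMap, LinearMap.det_smul, LinearMap.det_id,
    LinearMap.det_id, one_mul, mul_one]

end Submodule

namespace IsIdempotentElem

variable {K R : Type*} [CommRing K] [Ring R] [Algebra K R] {p : R}

theorem add_smul_one_sub_mul (hp : IsIdempotentElem p) (a b : K) :
    (p + a • (1 - p)) * (p + b • (1 - p)) = p + (a * b) • (1 - p) := by
  have h₁ : p * (1 - p) = 0 := by rw [mul_sub, mul_one, hp.eq, sub_self]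
  have h₂ : (1 - p) * p = 0 := by rw [sub_mul, one_mul, hp.eq, sub_self]
  simp only [add_mul, mul_add, smul_mul_assoc, mul_smul_comm, smul_smul, h₁, h₂, hp.eq,
    hp.one_sub.eq, smul_zero, add_zero, zero_add, mul_comm b a]

noncomputable def scaling (hp : IsIdempotentElem p) : Kˣ →* Rˣ where
  toFun t :=
    { val := p + (t : K) • (1 - p)
      inv := p + ((t⁻¹ : Kˣ) : K) • (1 - p)
      val_inv := by
        rw [hp.add_smul_one_sub_mul, ← Units.val_mul, mul_inv_cancel, Units.val_one, one_smul,
          add_sub_cancel]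
      inv_val := by
        rw [hp.add_smul_one_sub_mul, ← Units.val_mul, inv_mul_cancel, Units.val_one, one_smul,
          add_sub_cancel] }
  map_one' := by ext; simp
  map_mul' a b := by ext; simp [hp.add_smul_one_sub_mul]

theorem val_scaling (hp : IsIdempotentElem p) (t : Kˣ) :
    (hp.scaling t : R) = p + (t : K) • (1 - p) :=
  rfl

end IsIdempotentElem

namespace Matrix

section Projection

variable {K n o : Type*} [Field K] [Fintype n] [DecidableEq n] {S C : Submodule K (n → K)}

noncomputable def projection (h : IsCompl S C) : Matrix n n K :=
  LinearMap.toMatrix' (S.projection C h)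

theorem projection_mulVec (h : IsCompl S C) (x : n → K) :
    projection h *ᵥ x = S.projection C h x :=
  LinearMap.toMatrix'_mulVec _ _

theorem isIdempotentElem_projection (h : IsCompl S C) : IsIdempotentElem (projection h) :=
  (Submodule.isIdempotentElem_projection h).map LinearMap.toMatrixAlgEquiv'

theorem one_sub_projection_mul_eq_zero [Fintype o] (h : IsCompl S C) {M : Matrix n o K}
    (hM : LinearMap.range M.mulVecLin ≤ S) : (1 - projection h) * M = 0 := by
  refine ext_iff_mulVec.2 fun x => ?_
  rw [← mulVec_mulVec, sub_mulVec, one_mulVec, projection_mulVec,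
    Submodule.projection_apply_of_mem_left h (x := M *ᵥ x) (hM ⟨x, rfl⟩), sub_self, zero_mulVec]

theorem one_sub_projection_mul_mul_projection_eq_zero [Fintype o] [DecidableEq o]
    {T D : Submodule K (o → K)} (h : IsCompl S C) (h' : IsCompl T D) {M : Matrix o n K}
    (hM : S.map M.mulVecLin ≤ T) : (1 - projection h') * M * projection h = 0 := by
  rw [Matrix.mul_assoc]
  refine one_sub_projection_mul_eq_zero h' ?_
  rintro _ ⟨x, rfl⟩
  rw [mulVecLin_apply, ← mulVec_mulVec, projection_mulVec]
  exact hM ⟨_, Submodule.projection_apply_mem h x, rfl⟩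

theorem det_projection_add_smul (h : IsCompl S C) (t : K) :
    (projection h + t • (1 - projection h)).det = t ^ Module.finrank K C := by
  rw [← Submodule.det_projection_add_smul_projection h t, ← LinearMap.det_toMatrix',
    Submodule.projection_eq_id_sub_projection h, projection]
  simp [LinearMap.toMatrix'_id]

end Projection

theorem add_smul_mul_mul_add_smul {K ι κ : Type*} [CommRing K] [Fintype ι] [Fintype κ]
    {P' Q' : Matrix ι ι K} {P Q : Matrix κ κ K} {A : Matrix ι κ K} (hA : Q' * A * P = 0)
    (a b : K) :
    (P' + a • Q') * A * (P + b • Q) = P' * A * P + b • (P' * A * Q) + (a * b) • (Q' * A * Q) := by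
  simp only [Matrix.add_mul, Matrix.mul_add, Matrix.smul_mul, Matrix.mul_smul, hA, smul_zero,
    add_zero]
  module

theorem exists_det_ne_zero_of_span_eq_top {K n ι : Type*} [Field K] [Fintype n] [DecidableEq n]
    {f : ι → n → K} (hf : Submodule.span K (Set.range f) = ⊤) :
    ∃ b : n → ι, (of fun r c => f (b c) r).det ≠ 0 := by
  obtain ⟨κ, a, -, hspan, hli⟩ := exists_linearIndependent' K f
  let e := (Module.Basis.mk hli (by rw [hspan, hf])).indexEquiv (Pi.basisFun K n)
  have hcols : LinearIndependent K (f ∘ a ∘ e.symm) := hli.comp e.symm e.symm.injective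
  exact ⟨a ∘ e.symm,
    ((isUnit_iff_isUnit_det _).1 (linearIndependent_cols_iff_isUnit.1 hcols)).ne_zero⟩

end Matrix

namespace Subring

variable {X R : Type*} [CommRing R] (T : Subring (X → R))

theorem mulVec_apply_mem {ι κ : Type*} [Fintype κ] {M : X → Matrix ι κ R} {y : X → κ → R}
    (hM : ∀ r c, (fun x => M x r c) ∈ T) (hy : ∀ c, (fun x => y x c) ∈ T) (r : ι) :
    (fun x => (M x).mulVec (y x) r) ∈ T := by
  simp only [Matrix.mulVec, dotProduct, ← Finset.sum_fn]
  exact T.sum_mem fun c _ => T.mul_mem (hM r c) (hy c)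

theorem det_apply_mem {n : Type*} [Fintype n] [DecidableEq n] {M : X → Matrix n n R}
    (hM : ∀ r c, (fun x => M x r c) ∈ T) : (fun x => (M x).det) ∈ T := by
  simp only [Matrix.det_apply', ← Finset.sum_fn]
  refine T.sum_mem fun σ _ => T.mul_mem (intCast_mem T (Equiv.Perm.sign σ : ℤ)) ?_
  rw [← Finset.prod_fn]
  exact T.prod_mem fun i _ => hM _ _

end Subring

namespace Polynomial

theorem eq_zero_of_pow_mul_eval_eq {K : Type*} [Field K] [Infinite K] {q : K[X]} {N : ℕ}
    (hN : N ≠ 0) {a : K} (h : ∀ s ≠ 0, s ^ N * q.eval s = a) : a = 0 := by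
  have hq : X ^ N * q - C a = 0 := by
    refine eq_zero_of_infinite_isRoot _ ((Set.finite_singleton 0).infinite_compl.mono ?_)
    intro s hs
    simp [h s hs]
  simpa [zero_pow hN] using congrArg (eval 0) hq

end Polynomial

namespace QuiverVariety

open Matrix MvPolynomial

variable {v w : ℕ → ℕ}

inductive FramedPath (w : ℕ → ℕ) : ℕ → Type
  | framing (j : ℕ) (c : Fin (w j)) : FramedPath w j
  | up (i : ℕ) : FramedPath w i → FramedPath w (i + 1)
  | down (i : ℕ) : FramedPath w (i + 1) → FramedPath w i

def pathVec (m : Mvw v w) : ∀ {j : ℕ}, FramedPath w j → Fin (v j) → ℂ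
  | _, .framing j c => fun r => m.2.2.1 j r c
  | _, .up i p => m.1 i *ᵥ pathVec m p
  | _, .down i p => m.2.1 i *ᵥ pathVec m p

theorem pathVec_actGv (g : Gv v) (m : Mvw v w) {j : ℕ} (p : FramedPath w j) :
    pathVec (actGv g m) p = (g j : Matrix _ _ ℂ) *ᵥ pathVec m p := by
  induction p with
  | framing j c => ext r; simp [pathVec, actGv, mul_apply, mulVec, dotProduct]
  | up i p ih => rw [pathVec, pathVec, ih]; simp [actGv, mulVec_mulVec, Matrix.mul_assoc]
  | down i p ih => rw [pathVec, pathVec, ih]; simp [actGv, mulVec_mulVec, Matrix.mul_assoc]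

theorem span_pathVec_eq_top {m : Mvw v w} (h : SubCond m) (j : ℕ) :
    Submodule.span ℂ (Set.range fun p : FramedPath w j => pathVec m p) = ⊤ := by
  refine h (fun j => Submodule.span ℂ (Set.range fun p : FramedPath w j => pathVec m p))
    (fun j => ?_) (fun i => ?_) (fun i => ?_) j
  · rw [range_mulVecLin]
    refine Submodule.span_mono ?_
    rintro _ ⟨c, rfl⟩
    exact ⟨.framing j c, rfl⟩
  · rw [Submodule.map_span, Submodule.span_le]
    rintro _ ⟨_, ⟨p, rfl⟩, rfl⟩
    exact Submodule.subset_span ⟨.up i p, rfl⟩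
  · rw [Submodule.map_span, Submodule.span_le]
    rintro _ ⟨_, ⟨p, rfl⟩, rfl⟩
    exact Submodule.subset_span ⟨.down i p, rfl⟩

noncomputable def polynomialFns (v w : ℕ → ℕ) : Subring (Mvw v w → ℂ) :=
  (RingHom.pi fun m => eval (coords m)).range

theorem coords_mem_polynomialFns (idx : CoordIdx v w) :
    (fun m => coords m idx) ∈ polynomialFns v w :=
  ⟨X idx, funext fun _ => eval_X _⟩

theorem pathVec_apply_mem_polynomialFns {j : ℕ} (p : FramedPath w j) (r : Fin (v j)) :
    (fun m : Mvw v w => pathVec m p r) ∈ polynomialFns v w := by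
  induction p with
  | framing j c => exact coords_mem_polynomialFns (.inr (.inr (.inl ⟨j, r, c⟩)))
  | up i p ih =>
    exact Subring.mulVec_apply_mem _ (fun r c => coords_mem_polynomialFns (.inl ⟨i, r, c⟩)) ih r
  | down i p ih =>
    exact Subring.mulVec_apply_mem _ (fun r c => coords_mem_polynomialFns (.inr (.inl ⟨i, r, c⟩)))
      ih r

theorem oneSemistable_of_subCond (n : ℕ) {m : Mvw v w} (h : SubCond m) : OneSemistable n m := by
  choose b hb using fun j => exists_det_ne_zero_of_span_eq_top (span_pathVec_eq_top h j)
  obtain ⟨F, hF⟩ : (∏ j ∈ Finset.range (n + 1), fun m' : Mvw v w =>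
      (of fun r c => pathVec m' (b j c) r).det) ∈ polynomialFns v w :=
    Subring.prod_mem _ fun j _ =>
      Subring.det_apply_mem _ fun r c => pathVec_apply_mem_polynomialFns _ _
  have hF' : ∀ m', eval (coords m') F =
      ∏ j ∈ Finset.range (n + 1), (of fun r c => pathVec m' (b j c) r).det :=
    fun m' => (congrFun hF m').trans (Finset.prod_apply _ _ _)
  refine ⟨1, le_rfl, F, fun g m' _ => ?_, ?_⟩
  · rw [hF', hF', pow_one, ← Finset.prod_mul_distrib]
    refine Finset.prod_congr rfl fun j _ => ?_
    rw [← det_mul]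
    congr 1
    ext r c
    simp [pathVec_actGv, mulVec, mul_apply, dotProduct]
  · rw [hF']
    exact Finset.prod_ne_zero_iff.2 fun j _ => hb j

theorem coords_add_smul (m₀ m₁ : Mvw v w) (s : ℂ) (idx : CoordIdx v w) :
    coords (m₀ + s • m₁) idx = coords m₀ idx + s * coords m₁ idx := by
  rcases idx with ⟨i, r, c⟩ | ⟨i, r, c⟩ | ⟨j, r, c⟩ | ⟨j, r, c⟩ <;> rfl

theorem exists_polynomial_eval_coords_add_smul (F : MvPolynomial (CoordIdx v w) ℂ)
    (m₀ m₁ : Mvw v w) :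
    ∃ q : Polynomial ℂ, ∀ s, q.eval s = eval (coords (m₀ + s • m₁)) F := by
  refine ⟨aeval (fun idx => Polynomial.C (coords m₀ idx) + Polynomial.X * Polynomial.C
    (coords m₁ idx)) F, fun s => ?_⟩
  rw [← Polynomial.coe_aeval_eq_eval, comp_aeval_apply]
  exact congrArg (fun x => eval x F) (funext fun idx => by simp [coords_add_smul]; ring)

theorem exists_actGv_scaling_eq_add_smul {m : Mvw v w}
    {P : ∀ j, Matrix (Fin (v j)) (Fin (v j)) ℂ} (hP : ∀ j, IsIdempotentElem (P j))
    (hA : ∀ i, (1 - P (i + 1)) * m.1 i * P i = 0)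
    (hB : ∀ i, (1 - P i) * m.2.1 i * P (i + 1) = 0)
    (hΓ : ∀ j, (1 - P j) * m.2.2.1 j = 0) :
    ∃ m₀ m₁ : Mvw v w, ∀ u : ℂˣ, actGv (fun j => (hP j).scaling u⁻¹) m = m₀ + (u : ℂ) • m₁ := by
  refine ⟨(fun i => P (i + 1) * m.1 i * P i + (1 - P (i + 1)) * m.1 i * (1 - P i),
      fun i => P i * m.2.1 i * P (i + 1) + (1 - P i) * m.2.1 i * (1 - P (i + 1)),
      m.2.2.1, fun j => m.2.2.2 j * P j),
    (fun i => P (i + 1) * m.1 i * (1 - P i), fun i => P i * m.2.1 i * (1 - P (i + 1)),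
      0, fun j => m.2.2.2 j * (1 - P j)), fun u => ?_⟩
  have hinv : ∀ j, ((((hP j).scaling u⁻¹)⁻¹ : (Matrix _ _ ℂ)ˣ) : Matrix _ _ ℂ)
      = P j + (u : ℂ) • (1 - P j) := fun j => by
    rw [← map_inv, inv_inv, IsIdempotentElem.val_scaling]
  have hu : ((u⁻¹ : ℂˣ) : ℂ) * u = 1 := u.inv_mul
  have hPΓ : ∀ j, P j * m.2.2.1 j = m.2.2.1 j := fun j =>
    (sub_eq_zero.1 (by rw [← hΓ j, Matrix.sub_mul, Matrix.one_mul])).symm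
  refine Prod.ext (funext fun i => ?_) (Prod.ext (funext fun i => ?_)
    (Prod.ext (funext fun j => ?_) (funext fun j => ?_)))
  · simp only [actGv, hinv, IsIdempotentElem.val_scaling]
    rw [add_smul_mul_mul_add_smul (hA i), hu, one_smul]
    simp only [Prod.fst_add, Prod.smul_fst, Pi.add_apply, Pi.smul_apply]
    abel
  · simp only [actGv, hinv, IsIdempotentElem.val_scaling]
    rw [add_smul_mul_mul_add_smul (hB i), hu, one_smul]
    simp only [Prod.fst_add, Prod.snd_add, Prod.smul_fst, Prod.smul_snd, Pi.add_apply,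
      Pi.smul_apply]
    abel
  · simp only [actGv, IsIdempotentElem.val_scaling]
    simp [Matrix.add_mul, Matrix.smul_mul, hΓ j, hPΓ j]
  · simp only [actGv, hinv]
    simp [Matrix.mul_add, Matrix.mul_smul]

theorem subCond_of_oneSemistable (n : ℕ) (hvn : ∀ i, n < i → v i = 0) {m : Mvw v w}
    (hm : inLambda m) (hss : OneSemistable n m) : SubCond m := by
  intro S hSΓ hSA hSB
  by_contra! hS
  obtain ⟨j₀, hj₀⟩ := hS
  obtain ⟨k, hk, F, hF, hFm⟩ := hss
  choose C hC using fun j => (S j).exists_isCompl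
  have hP := fun j => isIdempotentElem_projection (hC j)
  obtain ⟨m₀, m₁, hm₀₁⟩ := exists_actGv_scaling_eq_add_smul hP
    (fun i => one_sub_projection_mul_mul_projection_eq_zero _ _ (hSA i))
    (fun i => one_sub_projection_mul_mul_projection_eq_zero _ _ (hSB i))
    (fun j => one_sub_projection_mul_eq_zero _ (hSΓ j))
  obtain ⟨q, hq⟩ := exists_polynomial_eval_coords_add_smul F m₀ m₁
  set c := ∑ j ∈ Finset.range (n + 1), Module.finrank ℂ (C j)
  have hj₀n : j₀ < n + 1 := by
    by_contra! hj
    have : IsEmpty (Fin (v j₀)) := by rw [hvn j₀ (by omega)]; infer_instance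
    exact hj₀ (Subsingleton.elim _ _)
  have hc : c ≠ 0 := by
    refine (Finset.sum_pos' (fun _ _ => Nat.zero_le _) ⟨j₀, Finset.mem_range.2 hj₀n, ?_⟩).ne'
    refine Module.finrank_pos_iff.2 (Submodule.nontrivial_iff_ne_bot.2 fun hbot => hj₀ ?_)
    exact eq_top_of_isCompl_bot (hbot ▸ hC j₀)
  refine hFm (Polynomial.eq_zero_of_pow_mul_eval_eq (q := q) (N := c * k)
    (mul_ne_zero hc (by omega)) fun s hs => ?_)
  lift s to ℂˣ using hs.isUnit
  have hdet : ∏ j ∈ Finset.range (n + 1), ((hP j).scaling s⁻¹).val.det = ((s⁻¹ : ℂˣ) : ℂ) ^ c := by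
    rw [← Finset.prod_pow_eq_pow_sum]
    exact Finset.prod_congr rfl fun j _ => det_projection_add_smul (hC j) _
  rw [hq, ← hm₀₁, hF _ _ hm, hdet, ← mul_assoc, pow_mul, ← mul_pow, ← mul_pow, s.mul_inv,
    one_pow, one_pow, one_mul]

end QuiverVariety

theorem stmt5_general (n : ℕ) (v w : ℕ → ℕ)
    (hvn : ∀ i, n < i → v i = 0)
    (m : Mvw v w) (hm : inLambda m) :
    OneSemistable n m ↔ SubCond m :=
  ⟨QuiverVariety.subCond_of_oneSemistable n hvn hm, QuiverVariety.oneSemistable_of_subCond n⟩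

/-- a point of `Λ(v,w)` is `𝟏`-semistable iff it satisfies the subspace
condition. -/
theorem stmt5 (n : ℕ) (hn : 1 ≤ n) (v w : ℕ → ℕ)
    (hv0 : v 0 = 0) (hvn : ∀ i, n < i → v i = 0)
    (hw0 : w 0 = 0) (hwn : ∀ j, n < j → w j = 0)
    (m : Mvw v w) (hm : inLambda m) :
    OneSemistable n m ↔ SubCond m :=
  stmt5_general n v w hvn m hm
end

section
/- If a point m = (A_i, B_i, Γ_j, Δ_j) ∈ M(v,w) satisfies the subspace condition, then its stabilizer in G_v is trivial: any g ∈ G_v with g·m = m is the identity element. -/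
/-- a point of `M(v,w)` satisfying the subspace condition has trivial
stabilizer in `G_v`: if `g · m = m` then `g` is the identity. -/
theorem stmt6 (n : ℕ) (hn : 1 ≤ n) (v w : ℕ → ℕ)
    (hv0 : v 0 = 0) (hvn : ∀ i, n < i → v i = 0)
    (hw0 : w 0 = 0) (hwn : ∀ j, n < j → w j = 0)
    (m : Mvw v w) (hm : SubCond m)
    (g : Gv v) (hg : actGv g m = m) :
    ∀ i, g i = 1 := by

  -- Extract componentwise equations from `hg`.
  have hgA : ∀ i, (g (i + 1)).val * m.1 i * (g i)⁻¹.val = m.1 i := fun i =>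
    congrFun (congrArg Prod.fst hg) i
  have hgB : ∀ i, (g i).val * m.2.1 i * (g (i + 1))⁻¹.val = m.2.1 i := fun i =>
    congrFun (congrArg (fun p => p.2.1) hg) i
  have hgC : ∀ j, (g j).val * m.2.2.1 j = m.2.2.1 j := fun j =>
    congrFun (congrArg (fun p => p.2.2.1) hg) j
  have hA : ∀ i, (g (i + 1)).val * m.1 i = m.1 i * (g i).val := by
    intro i
    calc (g (i + 1)).val * m.1 i
        = ((g (i + 1)).val * m.1 i * (g i)⁻¹.val) * (g i).val := by
          rw [Matrix.mul_assoc, Matrix.mul_assoc, ← Units.val_mul, inv_mul_cancel,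
            Units.val_one, Matrix.mul_one]
      _ = m.1 i * (g i).val := by rw [hgA]
  have hB : ∀ i, (g i).val * m.2.1 i = m.2.1 i * (g (i + 1)).val := by
    intro i
    calc (g i).val * m.2.1 i
        = ((g i).val * m.2.1 i * (g (i + 1))⁻¹.val) * (g (i + 1)).val := by
          rw [Matrix.mul_assoc, Matrix.mul_assoc, ← Units.val_mul, inv_mul_cancel,
            Units.val_one, Matrix.mul_one]
      _ = m.2.1 i * (g (i + 1)).val := by rw [hgB]
  -- The fixed subspaces.
  set S : (j : ℕ) → Submodule ℂ (Fin (v j) → ℂ) :=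
    fun j => LinearMap.ker ((g j).val.mulVecLin - LinearMap.id) with hS
  have hmem : ∀ j (x : Fin (v j) → ℂ), x ∈ S j ↔ (g j).val.mulVec x = x := by
    intro j x
    simp [hS, LinearMap.mem_ker, sub_eq_zero]
  have h1 : ∀ j, LinearMap.range (m.2.2.1 j).mulVecLin ≤ S j := by
    intro j x hx
    obtain ⟨y, rfl⟩ := hx
    rw [hmem]
    simp only [Matrix.mulVecLin_apply]
    rw [Matrix.mulVec_mulVec, hgC]
  have h2 : ∀ i, Submodule.map (m.1 i).mulVecLin (S i) ≤ S (i + 1) := by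
    intro i x hx
    obtain ⟨y, hy, rfl⟩ := hx
    simp only [SetLike.mem_coe] at hy
    rw [hmem] at hy
    rw [hmem]
    simp only [Matrix.mulVecLin_apply, Matrix.mulVec_mulVec, hA]
    rw [← Matrix.mulVec_mulVec, hy]
  have h3 : ∀ i, Submodule.map (m.2.1 i).mulVecLin (S (i + 1)) ≤ S i := by
    intro i x hx
    obtain ⟨y, hy, rfl⟩ := hx
    simp only [SetLike.mem_coe] at hy
    rw [hmem] at hy
    rw [hmem]
    simp only [Matrix.mulVecLin_apply, Matrix.mulVec_mulVec, hB]
    rw [← Matrix.mulVec_mulVec, hy]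
  have htop := hm S h1 h2 h3
  intro j
  have hfix : ∀ x : Fin (v j) → ℂ, (g j).val.mulVec x = x := by
    intro x
    rw [← hmem]
    rw [htop j]
    trivial
  ext a b
  have := congrFun (hfix (Pi.single b 1)) a
  simpa [Matrix.mulVec_single, Matrix.one_apply, Pi.single_apply, eq_comm] using this
end

section
/- If a point m ∈ Λ(v,w) satisfies the subspace condition, then the G_v-orbit of m is a closed subset of the set of all points of Λ(v,w) satisfying the subspace condition, where this set carries the subspace topology from the vector space M(v,w). -/
open Set Submodule Matrix

/-- Words: formal expressions producing vectors in `V_j` from a point of `M(v,w)`. -/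
inductive Wd (v w : ℕ → ℕ) : ℕ → Type
  | gam (j : ℕ) (c : Fin (w j)) : Wd v w j
  | up (i : ℕ) : Wd v w i → Wd v w (i + 1)
  | down (i : ℕ) : Wd v w (i + 1) → Wd v w i

/-- Evaluation of a word at a point. -/
noncomputable def evalW {v w : ℕ → ℕ} (x : Mvw v w) : ∀ {j : ℕ}, Wd v w j → (Fin (v j) → ℂ)
  | _, Wd.gam j c => fun r => x.2.2.1 j r c
  | _, Wd.up i wd => (x.1 i).mulVec (evalW x wd)
  | _, Wd.down i wd => (x.2.1 i).mulVec (evalW x wd)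

lemma evalW_continuous {v w : ℕ → ℕ} {j : ℕ} (wd : Wd v w j) :
    Continuous fun x : Mvw v w => evalW x wd := by
  induction wd with
  | gam j c =>
      apply continuous_pi
      intro r
      exact (continuous_apply c).comp ((continuous_apply r).comp ((continuous_apply j).comp
        (continuous_fst.comp (continuous_snd.comp continuous_snd))))
  | up i wd ih =>
      exact Continuous.matrix_mulVec ((continuous_apply i).comp continuous_fst) ih
  | down i wd ih =>
      exact Continuous.matrix_mulVec ((continuous_apply i).comp
        (continuous_fst.comp continuous_snd)) ih

lemma evalW_act {v w : ℕ → ℕ} (g : Gv v) (x : Mvw v w) {j : ℕ} (wd : Wd v w j) :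
    evalW (actGv g x) wd = (g j).val.mulVec (evalW x wd) := by
  induction wd with
  | gam j c =>
      funext r
      simp [evalW, actGv, Matrix.mulVec, Matrix.mul_apply, dotProduct]
  | up i wd ih =>
      show (actGv g x).1 i *ᵥ evalW (actGv g x) wd = _
      rw [ih]
      show ((g (i+1)).val * x.1 i * ((g i)⁻¹).val) *ᵥ ((g i).val *ᵥ evalW x wd) = _
      rw [Matrix.mulVec_mulVec, Matrix.mul_assoc, Matrix.mul_assoc, Units.inv_mul,
        Matrix.mul_one, ← Matrix.mulVec_mulVec]
      rfl
  | down i wd ih =>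
      show (actGv g x).2.1 i *ᵥ evalW (actGv g x) wd = _
      rw [ih]
      show ((g i).val * x.2.1 i * ((g (i+1))⁻¹).val) *ᵥ ((g (i+1)).val *ᵥ evalW x wd) = _
      rw [Matrix.mulVec_mulVec, Matrix.mul_assoc, Matrix.mul_assoc, Units.inv_mul,
        Matrix.mul_one, ← Matrix.mulVec_mulVec]
      rfl

lemma span_evalW {v w : ℕ → ℕ} {x : Mvw v w} (hx : SubCond x) (j : ℕ) :
    span ℂ (Set.range fun wd : Wd v w j => evalW x wd) = ⊤ := by
  refine hx (fun j => span ℂ (Set.range fun wd : Wd v w j => evalW x wd)) ?_ ?_ ?_ j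
  · intro j
    rw [Matrix.range_mulVecLin, span_le]
    rintro y ⟨c, rfl⟩
    refine subset_span ⟨Wd.gam j c, ?_⟩
    funext r
    simp [evalW, Matrix.transpose_apply]
  · intro i
    rw [Submodule.map_span, span_le]
    rintro y ⟨z, ⟨wd, rfl⟩, rfl⟩
    refine subset_span ⟨Wd.up i wd, ?_⟩
    simp [evalW, Matrix.mulVecLin_apply]
  · intro i
    rw [Submodule.map_span, span_le]
    rintro y ⟨z, ⟨wd, rfl⟩, rfl⟩
    refine subset_span ⟨Wd.down i wd, ?_⟩
    simp [evalW, Matrix.mulVecLin_apply]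

lemma exists_words {v w : ℕ → ℕ} {x : Mvw v w} (hx : SubCond x) (j : ℕ) :
    ∃ (N : ℕ) (c : Fin N → Wd v w j),
      ⊤ ≤ span ℂ (Set.range fun t => evalW x (c t)) := by
  have hsp := span_evalW hx j
  have h1 : ∀ r : Fin (v j), ∃ (nr : ℕ) (f : Fin nr → ℂ)
      (g : Fin nr → Set.range fun wd : Wd v w j => evalW x wd),
      ∑ i, f i • (g i : Fin (v j) → ℂ) = Pi.single r 1 := by
    intro r
    exact mem_span_set'.1 (hsp ▸ mem_top)
  choose nr f g hg using h1
  have h2 : ∀ (r : Fin (v j)) (i : Fin (nr r)), ∃ wd : Wd v w j,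
      evalW x wd = (g r i : Fin (v j) → ℂ) := fun r i => (g r i).2
  choose wds hwds using h2
  let e := (Fintype.equivFin (Σ r : Fin (v j), Fin (nr r))).symm
  refine ⟨_, fun t => wds (e t).1 (e t).2, ?_⟩
  have hrange : (Set.range fun t => evalW x (wds (e t).1 (e t).2))
      = Set.range fun t : (Σ r : Fin (v j), Fin (nr r)) => evalW x (wds t.1 t.2) :=
    Function.Surjective.range_comp e.surjective
      (fun t : (Σ r : Fin (v j), Fin (nr r)) => evalW x (wds t.1 t.2))
  rw [hrange, ← (Pi.basisFun ℂ (Fin (v j))).span_eq, span_le]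
  rintro y ⟨r, rfl⟩
  have : (Pi.basisFun ℂ (Fin (v j))) r = Pi.single r 1 := Pi.basisFun_apply ℂ _ r
  rw [this, ← hg r]
  refine Submodule.sum_mem _ fun i _ => Submodule.smul_mem _ _ ?_
  rw [← hwds r i]
  exact subset_span ⟨⟨r, i⟩, rfl⟩

lemma exists_rightInv {k N : ℕ} (P : Matrix (Fin k) (Fin N) ℂ)
    (h : ⊤ ≤ span ℂ (Set.range Pᵀ)) : ∃ R : Matrix (Fin N) (Fin k) ℂ, P * R = 1 := by
  have hsurj : ∀ r : Fin k, ∃ u : Fin N → ℂ, P.mulVec u = Pi.single r 1 := by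
    intro r
    have : (Pi.single r 1 : Fin k → ℂ) ∈ LinearMap.range P.mulVecLin := by
      rw [Matrix.range_mulVecLin]; exact h trivial
    obtain ⟨u, hu⟩ := this
    exact ⟨u, hu⟩
  choose u hu using hsurj
  refine ⟨Matrix.of fun t r => u r t, ?_⟩
  ext s r
  have h2 := congrFun (hu r) s
  rw [Matrix.mulVec, dotProduct] at h2
  rw [Matrix.mul_apply, Matrix.one_apply]
  simp only [Matrix.of_apply]
  rw [h2, Pi.single_apply]

/-- Matrix whose columns are the evaluations of the words `c t`. -/
noncomputable def Pmat {v w : ℕ → ℕ} {j N : ℕ} (c : Fin N → Wd v w j) (x : Mvw v w) :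
    Matrix (Fin (v j)) (Fin N) ℂ := Matrix.of fun r t => evalW x (c t) r

lemma Pmat_continuous {v w : ℕ → ℕ} {j N : ℕ} (c : Fin N → Wd v w j) :
    Continuous fun x : Mvw v w => Pmat c x := by
  apply continuous_matrix
  intro r t
  exact (continuous_apply r).comp (evalW_continuous (c t))

lemma Pmat_act {v w : ℕ → ℕ} {j N : ℕ} (c : Fin N → Wd v w j) (g : Gv v) (x : Mvw v w) :
    Pmat c (actGv g x) = (g j).val * Pmat c x := by
  ext r t
  rw [Matrix.mul_apply]
  simp only [Pmat, Matrix.of_apply, evalW_act, Matrix.mulVec, dotProduct]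

lemma span_Pmat {v w : ℕ → ℕ} {x : Mvw v w} {j N : ℕ} {c : Fin N → Wd v w j}
    (h : ⊤ ≤ span ℂ (Set.range fun t => evalW x (c t))) :
    ⊤ ≤ span ℂ (Set.range (Pmat c x)ᵀ) := h

lemma orbit_closure_mem {v w : ℕ → ℕ} (m q : Mvw v w) (hmS : SubCond m) (hqS : SubCond q)
    (hq : q ∈ closure {x : Mvw v w | ∃ g : Gv v, x = actGv g m}) :
    ∃ g : Gv v, q = actGv g m := by
  set s : Set (Mvw v w) := {x | ∃ g : Gv v, x = actGv g m} with hs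
  choose Nm cm hcm using fun j => exists_words hmS j
  choose Nq cq hcq using fun j => exists_words hqS j
  choose Rm hRm using fun j => exists_rightInv (Pmat (cm j) m) (span_Pmat (hcm j))
  set Gf : ∀ j : ℕ, Mvw v w → Matrix (Fin (v j)) (Fin (v j)) ℂ :=
    fun j x => Pmat (cm j) x * Rm j with hGf
  have hGfc : ∀ j, Continuous (Gf j) := fun j =>
    (Pmat_continuous (cm j)).matrix_mul continuous_const
  have hGfact : ∀ (j : ℕ) (g : Gv v), Gf j (actGv g m) = (g j).val := by
    intro j g
    rw [hGf]
    simp only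
    rw [Pmat_act, Matrix.mul_assoc, hRm, Matrix.mul_one]
  -- identities at q, via closure
  have key : ∀ (f₁ f₂ : Mvw v w → Matrix (Fin 0) (Fin 0) ℂ), True := fun _ _ => trivial
  have e1 : ∀ i, q.1 i * Gf i q = Gf (i + 1) q * m.1 i := by
    intro i
    have heq : Set.EqOn (fun x : Mvw v w => x.1 i * Gf i x)
        (fun x : Mvw v w => Gf (i + 1) x * m.1 i) s := by
      rintro x ⟨g, rfl⟩
      simp only
      rw [hGfact, hGfact]
      show (g (i+1)).val * m.1 i * ((g i)⁻¹).val * (g i).val = _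
      rw [Matrix.mul_assoc, Units.inv_mul, Matrix.mul_one]
    exact heq.closure (((continuous_apply i).comp continuous_fst).matrix_mul (hGfc i))
      ((hGfc (i + 1)).matrix_mul continuous_const) hq
  have e2 : ∀ i, q.2.1 i * Gf (i + 1) q = Gf i q * m.2.1 i := by
    intro i
    have heq : Set.EqOn (fun x : Mvw v w => x.2.1 i * Gf (i + 1) x)
        (fun x : Mvw v w => Gf i x * m.2.1 i) s := by
      rintro x ⟨g, rfl⟩
      simp only
      rw [hGfact, hGfact]
      show (g i).val * m.2.1 i * ((g (i+1))⁻¹).val * (g (i+1)).val = _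
      rw [Matrix.mul_assoc, Units.inv_mul, Matrix.mul_one]
    exact heq.closure (((continuous_apply i).comp
        (continuous_fst.comp continuous_snd)).matrix_mul (hGfc (i + 1)))
      ((hGfc i).matrix_mul continuous_const) hq
  have e3 : ∀ j, q.2.2.1 j = Gf j q * m.2.2.1 j := by
    intro j
    have heq : Set.EqOn (fun x : Mvw v w => x.2.2.1 j)
        (fun x : Mvw v w => Gf j x * m.2.2.1 j) s := by
      rintro x ⟨g, rfl⟩
      simp only
      rw [hGfact]
      rfl
    exact heq.closure ((continuous_apply j).comp
        (continuous_fst.comp (continuous_snd.comp continuous_snd)))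
      ((hGfc j).matrix_mul continuous_const) hq
  have e4 : ∀ j, q.2.2.2 j * Gf j q = m.2.2.2 j := by
    intro j
    have heq : Set.EqOn (fun x : Mvw v w => x.2.2.2 j * Gf j x)
        (fun x : Mvw v w => m.2.2.2 j) s := by
      rintro x ⟨g, rfl⟩
      simp only
      rw [hGfact]
      show m.2.2.2 j * ((g j)⁻¹).val * (g j).val = _
      rw [Matrix.mul_assoc, Units.inv_mul, Matrix.mul_one]
    exact heq.closure (((continuous_apply j).comp
        (continuous_snd.comp (continuous_snd.comp continuous_snd))).matrix_mul (hGfc j))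
      continuous_const hq
  -- invertibility of Gf j q
  have hunit : ∀ j, IsUnit (Gf j q) := by
    intro j
    have heq : Set.EqOn (fun x : Mvw v w => Pmat (cq j) x)
        (fun x : Mvw v w => Gf j x * Pmat (cq j) m) s := by
      rintro x ⟨g, rfl⟩
      simp only
      rw [hGfact, Pmat_act]
    have hQ : Pmat (cq j) q = Gf j q * Pmat (cq j) m :=
      heq.closure (Pmat_continuous (cq j)) ((hGfc j).matrix_mul continuous_const) hq
    obtain ⟨R', hR'⟩ := exists_rightInv (Pmat (cq j) q) (span_Pmat (hcq j))
    rw [hQ, Matrix.mul_assoc] at hR'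
    exact @isUnit_of_invertible _ _ _ (invertibleOfRightInverse _ _ hR')
  set g : Gv v := fun j => (hunit j).unit with hgdef
  have hgval : ∀ j, (g j).val = Gf j q := fun j => (hunit j).unit_spec
  refine ⟨g, ?_⟩
  have hmulinv : ∀ j, (g j).val * ((g j)⁻¹).val = 1 := by
    intro j
    rw [← Units.val_mul, mul_inv_cancel, Units.val_one]
  refine Prod.ext ?_ (Prod.ext ?_ (Prod.ext ?_ ?_))
  · funext i
    show q.1 i = (g (i + 1)).val * m.1 i * ((g i)⁻¹).val
    calc q.1 i = q.1 i * ((g i).val * ((g i)⁻¹).val) := by rw [hmulinv, Matrix.mul_one]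
    _ = (q.1 i * (g i).val) * ((g i)⁻¹).val := by rw [Matrix.mul_assoc]
    _ = (Gf (i + 1) q * m.1 i) * ((g i)⁻¹).val := by rw [hgval, e1]
    _ = (g (i + 1)).val * m.1 i * ((g i)⁻¹).val := by rw [hgval]
  · funext i
    show q.2.1 i = (g i).val * m.2.1 i * ((g (i + 1))⁻¹).val
    calc q.2.1 i = q.2.1 i * ((g (i+1)).val * ((g (i+1))⁻¹).val) := by
          rw [hmulinv, Matrix.mul_one]
    _ = (q.2.1 i * (g (i+1)).val) * ((g (i+1))⁻¹).val := by rw [Matrix.mul_assoc]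
    _ = (Gf i q * m.2.1 i) * ((g (i+1))⁻¹).val := by rw [hgval, e2]
    _ = (g i).val * m.2.1 i * ((g (i + 1))⁻¹).val := by rw [hgval]
  · funext j
    show q.2.2.1 j = (g j).val * m.2.2.1 j
    rw [hgval, e3]
  · funext j
    show q.2.2.2 j = m.2.2.2 j * ((g j)⁻¹).val
    calc q.2.2.2 j = q.2.2.2 j * ((g j).val * ((g j)⁻¹).val) := by
          rw [hmulinv, Matrix.mul_one]
    _ = (q.2.2.2 j * (g j).val) * ((g j)⁻¹).val := by rw [Matrix.mul_assoc]
    _ = m.2.2.2 j * ((g j)⁻¹).val := by rw [hgval, e4]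

/-- if `m ∈ Λ(v,w)` satisfies the subspace condition, then the `G_v`-orbit
of `m` is a closed subset of the set of all points of `Λ(v,w)` satisfying the subspace
condition, with the subspace topology from the vector space `M(v,w)`. -/
theorem stmt7 (n : ℕ) (hn : 1 ≤ n) (v w : ℕ → ℕ)
    (hv0 : v 0 = 0) (hvn : ∀ i, n < i → v i = 0)
    (hw0 : w 0 = 0) (hwn : ∀ j, n < j → w j = 0)
    (m : Mvw v w) (hmL : inLambda m) (hmS : SubCond m) :
    IsClosed {p : {q : Mvw v w // inLambda q ∧ SubCond q} |
      ∃ g : Gv v, (p : Mvw v w) = actGv g m} := by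
  have hset : {p : {q : Mvw v w // inLambda q ∧ SubCond q} |
      ∃ g : Gv v, (p : Mvw v w) = actGv g m}
      = Subtype.val ⁻¹' closure {x : Mvw v w | ∃ g : Gv v, x = actGv g m} := by
    ext p
    constructor
    · rintro ⟨g, hg⟩
      exact subset_closure ⟨g, hg⟩
    · intro hp
      exact orbit_closure_mem m p.val hmS p.2.2 hp
  rw [hset]
  exact isClosed_closure.preimage continuous_subtype_val
end

section
/- In the linear chain setting, the following are equivalent: (1) for all families of linear subspaces S_i ⊆ V_i (1 ≤ i ≤ m−1) such that Im A_0 ⊆ S_1, A_i(S_i) ⊆ S_{i+1} for 1 ≤ i ≤ m−2, and B_i(S_{i+1}) ⊆ S_i for 1 ≤ i ≤ m−2, one has S_i = V_i for all i; (2) the linear map A_i is surjective for every 0 ≤ i ≤ m−2. -/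
/-- linear chain setting: given `m ≥ 2`, `V_0 = ℂ^N`, finite-dimensional
complex vector spaces `V_1, …, V_{m-1}` (encoded as `ℂ^{v i}`, with `v i = 0` for `i ≥ m`),
and linear maps `A i : V i → V (i+1)`, `B i : V (i+1) → V i` satisfying the moment map
equations `A_i B_i = B_{i+1} A_{i+1}` for `0 ≤ i ≤ m-2` (the right-hand side being `0`
at `i = m-2` since `V m = 0`), the following are equivalent:
(1) every family of subspaces `S_i ⊆ V_i` (`1 ≤ i ≤ m-1`) with `Im A_0 ⊆ S_1`,
`A_i(S_i) ⊆ S_{i+1}` and `B_i(S_{i+1}) ⊆ S_i` for `1 ≤ i ≤ m-2` satisfies `S_i = V_i`;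
(2) `A_i` is surjective for every `0 ≤ i ≤ m-2`. -/
theorem stmt8 (m N : ℕ) (hm : 2 ≤ m) (hN : 1 ≤ N)
    (v : ℕ → ℕ) (hv0 : v 0 = N) (hvm : ∀ i, m ≤ i → v i = 0)
    (A : (i : ℕ) → (Fin (v i) → ℂ) →ₗ[ℂ] (Fin (v (i + 1)) → ℂ))
    (B : (i : ℕ) → (Fin (v (i + 1)) → ℂ) →ₗ[ℂ] (Fin (v i) → ℂ))
    (hmom : ∀ i, i ≤ m - 2 → (A i).comp (B i) = (B (i + 1)).comp (A (i + 1))) :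
    (∀ S : (i : ℕ) → Submodule ℂ (Fin (v i) → ℂ),
        LinearMap.range (A 0) ≤ S 1 →
        (∀ i, 1 ≤ i → i ≤ m - 2 → Submodule.map (A i) (S i) ≤ S (i + 1)) →
        (∀ i, 1 ≤ i → i ≤ m - 2 → Submodule.map (B i) (S (i + 1)) ≤ S i) →
        ∀ i, 1 ≤ i → i ≤ m - 1 → S i = ⊤) ↔
      (∀ i, i ≤ m - 2 → Function.Surjective (A i)) := by
  constructor
  · -- (1) → (2): use the invariant family S_{j+1} = range (A j)
    intro h1 i hi
    rw [← LinearMap.range_eq_top]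
    have key := h1 (fun j => match j with
        | 0 => ⊤
        | Nat.succ k => LinearMap.range (A k)) ?_ ?_ ?_ (i + 1) (by omega) (by omega)
    · exact key
    · exact le_refl _
    · rintro j hj1 hj2 x ⟨y, hy, rfl⟩
      exact LinearMap.mem_range_self _ y
    · rintro (_ | k) hj1 hj2 x hx
      · omega
      · -- S (k+2) = range (A (k+1)), S (k+1) = range (A k)
        rcases hx with ⟨y, ⟨z, rfl⟩, rfl⟩
        have hmk := hmom k (by omega)
        show B (k + 1) (A (k + 1) z) ∈ LinearMap.range (A k)
        have : B (k + 1) (A (k + 1) z) = A k (B k z) := by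
          have := congrArg (fun f => f z) hmk
          simpa using this.symm
        rw [this]
        exact LinearMap.mem_range_self _ _
  · -- (2) → (1)
    intro h2 S hS0 hSA hSB i hi1 hi2
    induction i with
    | zero => omega
    | succ k ih =>
      rcases Nat.eq_zero_or_pos k with rfl | hk
      · -- i = 1
        have : LinearMap.range (A 0) = ⊤ := LinearMap.range_eq_top.2 (h2 0 (by omega))
        exact top_le_iff.1 (this ▸ hS0)
      · have hk2 : k ≤ m - 2 := by omega
        have hktop : S k = ⊤ := ih (by omega) (by omega)
        have hmap := hSA k hk (by omega)
        rw [hktop, Submodule.map_top, LinearMap.range_eq_top.2 (h2 k hk2)] at hmap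
        exact top_le_iff.1 hmap
end

section
/- Let x be an N×N complex matrix and let a_1 ≥ a_2 ≥ ⋯ ≥ a_m be positive integers with a_1 + ⋯ + a_m = N. Then the following are equivalent: (1) there exist linear subspaces {0} = U_0 ⊆ U_1 ⊆ ⋯ ⊆ U_m = ℂ^N with dim U_k = a_1 + ⋯ + a_k and x(U_k) ⊆ U_{k−1} for all 1 ≤ k ≤ m; (2) for every 1 ≤ k ≤ m, the rank of x^k is at most N − (a_1 + ⋯ + a_k) (so in particular x^m = 0). -/
open Module Submodule LinearMap Finset

section Aux

variable {V : Type} [AddCommGroup V] [Module ℂ V]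
variable {W : Type} [AddCommGroup W] [Module ℂ W]

/-- rank–nullity for a restricted map -/
lemma aux_finrank_map_add [FiniteDimensional ℂ V] (φ : V →ₗ[ℂ] W) (R : Submodule ℂ V) :
    finrank ℂ (Submodule.map φ R) + finrank ℂ (R ⊓ LinearMap.ker φ : Submodule ℂ V)
      = finrank ℂ R := by
  have h := LinearMap.finrank_range_add_finrank_ker (φ.domRestrict R)
  rw [LinearMap.range_domRestrict, LinearMap.ker_domRestrict] at h
  rw [← h]
  congr 1
  have e1 : Submodule.comap R.subtype (LinearMap.ker φ)
      = Submodule.comap R.subtype (R ⊓ LinearMap.ker φ) := by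
    rw [Submodule.comap_inf, Submodule.comap_subtype_self, top_inf_eq]
  rw [e1]
  exact ((Submodule.comapSubtypeEquivOfLe (inf_le_left :
    R ⊓ LinearMap.ker φ ≤ R)).finrank_eq).symm

lemma aux_comap_mkQ [FiniteDimensional ℂ V] (p : Submodule ℂ V) (S : Submodule ℂ (V ⧸ p)) :
    finrank ℂ (Submodule.comap p.mkQ S) = finrank ℂ S + finrank ℂ p := by
  have h := aux_finrank_map_add p.mkQ (Submodule.comap p.mkQ S)
  rw [Submodule.map_comap_eq, Submodule.range_mkQ, top_inf_eq, Submodule.ker_mkQ] at h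
  have hp : Submodule.comap p.mkQ S ⊓ p = p := by
    rw [inf_eq_right]
    intro x hx
    simp [Submodule.mem_comap, (Submodule.Quotient.mk_eq_zero p).2 hx]
  rw [hp] at h
  omega

/-- between two nested subspaces there are subspaces of every intermediate dimension -/
lemma aux_between [FiniteDimensional ℂ V] {p q : Submodule ℂ V} (hpq : p ≤ q) (e : ℕ)
    (h1 : finrank ℂ p ≤ e) (h2 : e ≤ finrank ℂ q) :
    ∃ r : Submodule ℂ V, p ≤ r ∧ r ≤ q ∧ finrank ℂ r = e := by
  induction e, h1 using Nat.le_induction with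
  | base => exact ⟨p, le_rfl, hpq, rfl⟩
  | succ e he ih =>
    obtain ⟨r, hpr, hrq, hre⟩ := ih (by omega)
    have hlt : finrank ℂ r < finrank ℂ q := by omega
    have hne : r ≠ q := fun h => by rw [h] at hre; omega
    obtain ⟨x, hxq, hxr⟩ := SetLike.exists_of_lt (lt_of_le_of_ne hrq hne)
    refine ⟨r ⊔ Submodule.span ℂ {x}, le_trans hpr le_sup_left,
      sup_le hrq ((Submodule.span_singleton_le_iff_mem x q).2 hxq), ?_⟩
    have hx0 : x ≠ 0 := fun h => hxr (h ▸ r.zero_mem)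
    have hinf : r ⊓ Submodule.span ℂ {x} = ⊥ := by
      rw [eq_bot_iff]
      rintro y ⟨hyr, hys⟩
      obtain ⟨c, rfl⟩ := Submodule.mem_span_singleton.1 hys
      rcases eq_or_ne c 0 with rfl | hc
      · simp
      · exact absurd (by simpa [hc] using r.smul_mem c⁻¹ hyr) hxr
    have := Submodule.finrank_sup_add_finrank_inf_eq r (Submodule.span ℂ {x})
    rw [hinf, finrank_span_singleton hx0] at this
    simp only [finrank_bot] at this
    omega

/-- a subspace of prescribed dimension meeting every member of a descending chain maximally -/
lemma aux_chain [FiniteDimensional ℂ V] (t : ℕ) (K : ℕ → Submodule ℂ V)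
    (hK : ∀ j, K (j + 1) ≤ K j) (d : ℕ) (hd : d ≤ finrank ℂ (K 0)) :
    ∃ U : Submodule ℂ V, U ≤ K 0 ∧ finrank ℂ U = d ∧
      ∀ j ≤ t, min d (finrank ℂ (K j)) ≤ finrank ℂ (U ⊓ K j : Submodule ℂ V) := by
  induction t generalizing K d with
  | zero =>
    obtain ⟨U, _, hUK, hUd⟩ := aux_between (bot_le : (⊥ : Submodule ℂ V) ≤ K 0) d (by simp) hd
    refine ⟨U, hUK, hUd, ?_⟩
    intro j hj
    interval_cases j
    rw [inf_eq_left.2 hUK, hUd]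
    exact min_le_left _ _
  | succ t ih =>
    obtain ⟨U', hU'le, hU'rank, hU'⟩ := ih (fun j => K (j + 1)) (fun j => hK (j + 1))
      (min d (finrank ℂ (K 1)))
      (min_le_right _ _)
    obtain ⟨U, hle1, hle2, hrank⟩ := aux_between (le_trans hU'le (hK 0)) d
      (by rw [hU'rank]; exact min_le_left _ _) hd
    have hKmono : ∀ i j : ℕ, i ≤ j → K j ≤ K i := by
      intro i j hij
      induction j, hij using Nat.le_induction with
      | base => exact le_rfl
      | succ j hj ihj => exact le_trans (hK j) ihj
    refine ⟨U, hle2, hrank, ?_⟩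
    intro j hj
    match j with
    | 0 =>
      rw [inf_eq_left.2 hle2, hrank]
      exact min_le_left _ _
    | (j' + 1) =>
      have h1 := hU' j' (by omega)
      have h2 : finrank ℂ (K (j' + 1)) ≤ finrank ℂ (K 1) :=
        Submodule.finrank_mono (hKmono 1 (j' + 1) (by omega))
      have h3 : (U' ⊓ K (j' + 1) : Submodule ℂ V) ≤ U ⊓ K (j' + 1) :=
        inf_le_inf_right _ hle1
    -- min (min d b) c = min d c given c ≤ b
      have h4 : min (min d (finrank ℂ (K 1))) (finrank ℂ (K (j' + 1)))
          = min d (finrank ℂ (K (j' + 1))) := by omega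
      calc min d (finrank ℂ (K (j' + 1)))
          = min (min d (finrank ℂ (K 1))) (finrank ℂ (K (j' + 1))) := h4.symm
        _ ≤ finrank ℂ (U' ⊓ K (j' + 1) : Submodule ℂ V) := h1
        _ ≤ finrank ℂ (U ⊓ K (j' + 1) : Submodule ℂ V) := Submodule.finrank_mono h3

end Aux

/-- the key existence lemma, proved by induction on `m` passing to a quotient. -/
lemma flagB (m : ℕ) : ∀ (V : Type) [AddCommGroup V] [Module ℂ V] [FiniteDimensional ℂ V]
    (f : Module.End ℂ V) (a : ℕ → ℕ),
    1 ≤ m →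
    (∀ i j, i ≤ j → j < m → a j ≤ a i) →
    (∑ i ∈ Finset.range m, a i = finrank ℂ V) →
    (∀ k < m, finrank ℂ (LinearMap.range (f ^ (k + 1)))
        + ∑ j ∈ Finset.range (k + 1), a j ≤ finrank ℂ V) →
    ∃ U : ℕ → Submodule ℂ V, U 0 = ⊥ ∧ U m = ⊤ ∧
      (∀ k < m, U k ≤ U (k + 1)) ∧
      (∀ k < m, finrank ℂ (U (k + 1)) = ∑ j ∈ Finset.range (k + 1), a j) ∧
      (∀ k < m, Submodule.map f (U (k + 1)) ≤ U k) := by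
  induction m with
  | zero => intro V _ _ _ f a hm; omega
  | succ m ih =>
    intro V _ _ _ f a _ hmono hsum hrank
    rcases Nat.eq_zero_or_pos m with rfl | hm
    · -- base case m + 1 = 1
      have ha0 : a 0 = finrank ℂ V := by simpa using hsum
      have h0 := hrank 0 (by omega)
      rw [Finset.sum_range_one, pow_one, ha0] at h0
      have hr0 : finrank ℂ (LinearMap.range f) = 0 := by omega
      have hrbot : LinearMap.range f = ⊥ := Submodule.finrank_eq_zero.1 hr0
      refine ⟨fun k => match k with | 0 => ⊥ | _ + 1 => ⊤, rfl, rfl, ?_, ?_, ?_⟩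
      · intro k hk; interval_cases k; exact bot_le
      · intro k hk; interval_cases k
        show finrank ℂ (⊤ : Submodule ℂ V) = _
        rw [Finset.sum_range_one, finrank_top]
        exact ha0.symm
      · intro k hk; interval_cases k
        show Submodule.map f ⊤ ≤ (⊥ : Submodule ℂ V)
        rw [Submodule.map_top, hrbot]
    · -- inductive step
      set N := finrank ℂ V with hN
      have ha0N : a 0 ≤ N := by
        rw [← hsum]
        exact Finset.single_le_sum (fun i _ => Nat.zero_le _) (Finset.mem_range.2 (by omega))
      have hrn := LinearMap.finrank_range_add_finrank_ker f
      have h0 : finrank ℂ (LinearMap.range f) + a 0 ≤ N := by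
        have h := hrank 0 (by omega)
        rw [show f ^ (0 + 1) = f by rw [zero_add, pow_one], Finset.sum_range_one] at h
        exact h
      have hker : a 0 ≤ finrank ℂ (LinearMap.ker f) := by omega
      -- the chain
      set K : ℕ → Submodule ℂ V := fun j => LinearMap.range (f ^ j) ⊓ LinearMap.ker f with hKdef
      have hK0 : K 0 = LinearMap.ker f := by
        simp [hKdef, pow_zero, Module.End.one_eq_id, LinearMap.range_id]
      have hKstep : ∀ j, K (j + 1) ≤ K j := by
        intro j
        apply inf_le_inf_right
        rw [pow_succ, Module.End.mul_eq_comp]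
        exact LinearMap.range_comp_le_range _ _
      obtain ⟨U1, hU1le, hU1rank, hU1chain⟩ := aux_chain (m + 1) K hKstep (a 0)
        (by rw [hK0]; exact hker)
      rw [hK0] at hU1le
      -- quotient setup
      have hcm : U1 ≤ Submodule.comap f U1 := by
        intro x hx
        have : f x = 0 := hU1le hx
        simp [Submodule.mem_comap, this]
      set fbar : Module.End ℂ (V ⧸ U1) := Submodule.mapQ U1 U1 f hcm with hfbar
      have hcomm : ∀ (k : ℕ) (x : V), (fbar ^ k) (U1.mkQ x) = U1.mkQ ((f ^ k) x) := by
        intro k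
        induction k with
        | zero => intro x; simp
        | succ k ihk =>
          intro x
          have e1 : (fbar ^ (k + 1)) (U1.mkQ x) = (fbar ^ k) (fbar (U1.mkQ x)) := by
            rw [pow_succ, Module.End.mul_apply]
          have e2 : fbar (U1.mkQ x) = U1.mkQ (f x) := Submodule.mapQ_apply _ _ _ x
          rw [e1, e2, ihk (f x), ← Module.End.mul_apply, ← pow_succ]
      have hrangebar : ∀ k : ℕ, LinearMap.range (fbar ^ k)
          = Submodule.map U1.mkQ (LinearMap.range (f ^ k)) := by
        intro k
        have : LinearMap.range ((fbar ^ k) ∘ₗ U1.mkQ) = LinearMap.range (fbar ^ k) :=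
          LinearMap.range_comp_of_range_eq_top _ (Submodule.range_mkQ U1)
        rw [← this]
        have : (fbar ^ k) ∘ₗ U1.mkQ = U1.mkQ ∘ₗ (f ^ k) := by
          ext x; exact hcomm k x
        rw [this, LinearMap.range_comp]
      have hQ : finrank ℂ (V ⧸ U1) + a 0 = N := by
        have := Submodule.finrank_quotient_add_finrank U1
        rw [hU1rank] at this; exact this
      -- rank conditions in the quotient
      have hrankbar : ∀ k < m, finrank ℂ (LinearMap.range (fbar ^ (k + 1)))
          + ∑ j ∈ Finset.range (k + 1), a (j + 1) ≤ finrank ℂ (V ⧸ U1) := by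
        intro k hk
        have hmap := aux_finrank_map_add U1.mkQ (LinearMap.range (f ^ (k + 1)))
        rw [← hrangebar (k + 1), Submodule.ker_mkQ] at hmap
        have hchain := hU1chain (k + 1) (by omega)
        have hle : (U1 ⊓ K (k + 1) : Submodule ℂ V) ≤ LinearMap.range (f ^ (k + 1)) ⊓ U1 := by
          refine le_inf ?_ inf_le_left
          exact le_trans inf_le_right inf_le_left
        have hchain2 : min (a 0) (finrank ℂ (K (k + 1)))
            ≤ finrank ℂ (LinearMap.range (f ^ (k + 1)) ⊓ U1 : Submodule ℂ V) :=
          le_trans hchain (Submodule.finrank_mono hle)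
        have hi := hrank k (by omega)
        have hres := aux_finrank_map_add f (LinearMap.range (f ^ (k + 1)))
        have hmapr : LinearMap.range (f ^ (k + 2))
            = Submodule.map f (LinearMap.range (f ^ (k + 1))) := by
          conv_lhs => rw [show k + 2 = (k + 1) + 1 from rfl, pow_succ']
          rw [Module.End.mul_eq_comp, LinearMap.range_comp]
        rw [← hmapr] at hres
        have hii : finrank ℂ (LinearMap.range (f ^ (k + 2)))
            + ∑ j ∈ Finset.range (k + 2), a j ≤ N := hrank (k + 1) (by omega)
        rw [Finset.sum_range_succ' a (k + 1)] at hii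
        have hsum2 : ∑ j ∈ Finset.range (k + 1), a j + a (k + 1)
            = ∑ j ∈ Finset.range (k + 1), a (j + 1) + a 0 := by
          rw [← Finset.sum_range_succ a (k + 1), Finset.sum_range_succ' a (k + 1)]
        have hak : a (k + 1) ≤ a 0 := hmono 0 (k + 1) (by omega) (by omega)
        have hKk : K (k + 1) = LinearMap.range (f ^ (k + 1)) ⊓ LinearMap.ker f := rfl
        rw [hKk] at hchain2
        rcases min_cases (a 0)
          (finrank ℂ (LinearMap.range (f ^ (k + 1)) ⊓ LinearMap.ker f : Submodule ℂ V)) with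
          ⟨hmin, _⟩ | ⟨hmin, _⟩ <;> rw [hmin] at hchain2 <;> omega
      -- apply the induction hypothesis in the quotient
      obtain ⟨Ubar, hUbar0, hUbarm, hUbarmono, hUbarrank, hUbarmap⟩ :=
        ih (V ⧸ U1) fbar (fun n => a (n + 1)) hm
          (fun i j hij hj => hmono (i + 1) (j + 1) (by omega) (by omega))
          (by
            have h1 := Finset.sum_range_succ' a m
            rw [hsum] at h1
            show ∑ i ∈ Finset.range m, a (i + 1) = finrank ℂ (V ⧸ U1)
            omega)
          hrankbar
      -- assemble the flag
      refine ⟨fun k => match k with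
        | 0 => ⊥
        | (k + 1) => Submodule.comap U1.mkQ (Ubar k), rfl, ?_, ?_, ?_, ?_⟩
      · show Submodule.comap U1.mkQ (Ubar m) = ⊤
        rw [hUbarm, Submodule.comap_top]
      · intro k hk
        match k with
        | 0 => exact bot_le
        | (k + 1) => exact Submodule.comap_mono (hUbarmono k (by omega))
      · intro k hk
        match k with
        | 0 =>
          show finrank ℂ (Submodule.comap U1.mkQ (Ubar 0)) = _
          rw [hUbar0, aux_comap_mkQ, hU1rank]
          simp
        | (k + 1) =>
          show finrank ℂ (Submodule.comap U1.mkQ (Ubar (k + 1))) = _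
          rw [aux_comap_mkQ, hU1rank, hUbarrank k (by omega)]
          exact (Finset.sum_range_succ' a (k + 1)).symm
      · intro k hk
        match k with
        | 0 =>
          rintro y ⟨x, hx, rfl⟩
          have hxU1 : x ∈ U1 := by
            have : U1.mkQ x ∈ (⊥ : Submodule ℂ (V ⧸ U1)) := hUbar0 ▸ hx
            simpa [Submodule.mem_comap, Submodule.Quotient.mk_eq_zero] using this
          show f x ∈ (⊥ : Submodule ℂ V)
          simp only [Submodule.mem_bot]
          exact LinearMap.mem_ker.mp (hU1le hxU1)
        | (k + 1) =>
          rintro y ⟨x, hx, rfl⟩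
          show U1.mkQ (f x) ∈ Ubar k
          have h1 : U1.mkQ (f x) = fbar (U1.mkQ x) := (Submodule.mapQ_apply _ _ _ x).symm
          rw [h1]
          exact hUbarmap k (by omega) ⟨U1.mkQ x, hx, rfl⟩

lemma mulVecLin_pow {N : ℕ} (x : Matrix (Fin N) (Fin N) ℂ) (k : ℕ) :
    (x ^ k).mulVecLin = (x.mulVecLin : Module.End ℂ (Fin N → ℂ)) ^ k := by
  induction k with
  | zero => simp [Matrix.mulVecLin_one, Module.End.one_eq_id]
  | succ k ihk =>
    rw [pow_succ, Matrix.mulVecLin_mul, ihk, pow_succ, Module.End.mul_eq_comp]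

lemma sum_Iic_fin {m : ℕ} (a : Fin m → ℕ) (a' : ℕ → ℕ)
    (h : ∀ i : Fin m, a' i.val = a i) (k : Fin m) :
    ∑ j ∈ Finset.Iic k, a j = ∑ j ∈ Finset.range (k.val + 1), a' j := by
  refine Finset.sum_bij' (fun (j : Fin m) _ => (j : ℕ))
    (fun n hn => (⟨n, by
      have := Finset.mem_range.1 hn
      omega⟩ : Fin m)) ?_ ?_ ?_ ?_ ?_
  · intro j hj
    simp only [Finset.mem_Iic] at hj
    simp only [Finset.mem_range]
    exact Nat.lt_succ_of_le hj
  · intro n hn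
    simp only [Finset.mem_range] at hn
    simp only [Finset.mem_Iic]
    exact Fin.mk_le_of_le_val (by omega)
  · intro j hj; simp
  · intro n hn; simp
  · intro j hj; exact (h j).symm

/-- for an N×N complex matrix `x` and positive integers
`a 0 ≥ a 1 ≥ ⋯ ≥ a (m-1)` summing to `N`, the existence of a flag
`{0} = U_0 ⊆ U_1 ⊆ ⋯ ⊆ U_m = ℂ^N` with `dim U_k = a_1 + ⋯ + a_k` and `x(U_k) ⊆ U_{k-1}`
is equivalent to the rank conditions `rank (x^k) ≤ N - (a_1 + ⋯ + a_k)` for `1 ≤ k ≤ m`. -/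
theorem stmt9 (N m : ℕ) (hm : 1 ≤ m) (x : Matrix (Fin N) (Fin N) ℂ)
    (a : Fin m → ℕ) (ha_pos : ∀ i, 0 < a i)
    (ha_mono : ∀ i j : Fin m, i ≤ j → a j ≤ a i)
    (ha_sum : ∑ i, a i = N) :
    (∃ U : Fin (m + 1) → Submodule ℂ (Fin N → ℂ),
        U 0 = ⊥ ∧ U (Fin.last m) = ⊤ ∧
        (∀ k : Fin m, U k.castSucc ≤ U k.succ) ∧
        (∀ k : Fin m, Module.finrank ℂ (U k.succ) = ∑ j ∈ Finset.Iic k, a j) ∧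
        (∀ k : Fin m, Submodule.map x.mulVecLin (U k.succ) ≤ U k.castSucc)) ↔
      (∀ k : Fin m, (x ^ ((k : ℕ) + 1)).rank ≤ N - ∑ j ∈ Finset.Iic k, a j) := by
  have hNV : finrank ℂ (Fin N → ℂ) = N := by
    rw [Module.finrank_pi, Fintype.card_fin]
  set f : Module.End ℂ (Fin N → ℂ) := x.mulVecLin with hf
  -- extended sequence
  set a' : ℕ → ℕ := fun n => if h : n < m then a ⟨n, h⟩ else 0 with ha'
  have ha'val : ∀ i : Fin m, a' i.val = a i := by
    intro i; simp [ha', i.isLt]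
  have hsum' : ∀ k : Fin m, ∑ j ∈ Finset.Iic k, a j = ∑ j ∈ Finset.range (k.val + 1), a' j :=
    sum_Iic_fin a a' ha'val
  have hsumN : ∑ i ∈ Finset.range m, a' i = N := by
    rw [← ha_sum, ← Fin.sum_univ_eq_sum_range]
    exact Finset.sum_congr rfl (fun i _ => ha'val i)
  have hsle : ∀ k : Fin m, ∑ j ∈ Finset.range (k.val + 1), a' j ≤ N := by
    intro k
    rw [← hsumN]
    exact Finset.sum_le_sum_of_subset (by
      intro n hn
      simp only [Finset.mem_range] at hn ⊢
      omega)
  have hrank_eq : ∀ k : ℕ, (x ^ (k + 1)).rank = finrank ℂ (LinearMap.range (f ^ (k + 1))) := by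
    intro k
    rw [Matrix.rank, mulVecLin_pow]
  constructor
  · -- forward direction
    rintro ⟨U, hU0, hUlast, hUmono, hUrank, hUmap⟩ k
    -- map (f ^ n) (U n) = ⊥ for n ≤ m
    have key : ∀ n : ℕ, ∀ hn : n < m + 1,
        Submodule.map (f ^ n) (U ⟨n, hn⟩) ≤ (⊥ : Submodule ℂ (Fin N → ℂ)) := by
      intro n
      induction n with
      | zero =>
        intro hn
        rw [show (⟨0, hn⟩ : Fin (m + 1)) = 0 from rfl, hU0, Submodule.map_bot]
      | succ n ihn =>
        intro hn
        have hnm : n < m := by omega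
        have hstep := hUmap ⟨n, hnm⟩
        have e1 : (⟨n, hnm⟩ : Fin m).succ = ⟨n + 1, hn⟩ := rfl
        have e2 : (⟨n, hnm⟩ : Fin m).castSucc = ⟨n, Nat.lt_succ_of_lt hnm⟩ := rfl
        rw [e1, e2] at hstep
        calc Submodule.map (f ^ (n + 1)) (U ⟨n + 1, hn⟩)
            = Submodule.map (f ^ n) (Submodule.map f (U ⟨n + 1, hn⟩)) := by
              rw [pow_succ, Module.End.mul_eq_comp, Submodule.map_comp]
          _ ≤ Submodule.map (f ^ n) (U ⟨n, Nat.lt_succ_of_lt hnm⟩) := Submodule.map_mono hstep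
          _ ≤ ⊥ := ihn (Nat.lt_succ_of_lt hnm)
    have hker : U k.succ ≤ LinearMap.ker (f ^ (k.val + 1)) := by
      intro v hv
      have hsucc : k.succ = (⟨k.val + 1, Nat.succ_lt_succ k.isLt⟩ : Fin (m + 1)) := rfl
      have := key (k.val + 1) (Nat.succ_lt_succ k.isLt) ⟨v, hsucc ▸ hv, rfl⟩
      simpa [LinearMap.mem_ker] using this
    have hrn := LinearMap.finrank_range_add_finrank_ker (f ^ (k.val + 1))
    rw [hNV] at hrn
    have hdim : finrank ℂ (U k.succ) ≤ finrank ℂ (LinearMap.ker (f ^ (k.val + 1))) :=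
      Submodule.finrank_mono hker
    rw [hUrank k, hsum' k] at hdim
    rw [hrank_eq k.val, hsum' k]
    omega
  · -- reverse direction
    intro hr
    obtain ⟨U, hU0, hUm, hUmono, hUrank, hUmap⟩ := flagB m (Fin N → ℂ) f a' hm
      (by
        intro i j hij hj
        have hi : i < m := by omega
        simp only [ha', dif_pos hi, dif_pos hj]
        exact ha_mono ⟨i, hi⟩ ⟨j, hj⟩ hij)
      (by rw [hsumN, hNV])
      (by
        intro k hk
        have := hr ⟨k, hk⟩
        rw [hrank_eq k, hsum' ⟨k, hk⟩] at this
        have h2 := hsle ⟨k, hk⟩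
        rw [hNV]
        simp only at this h2
        omega)
    refine ⟨fun k => U k.val, ?_, ?_, ?_, ?_, ?_⟩
    · exact hU0
    · simpa [Fin.val_last] using hUm
    · intro k
      have := hUmono k.val k.isLt
      simpa [Fin.coe_castSucc, Fin.val_succ] using this
    · intro k
      have := hUrank k.val k.isLt
      rw [hsum' k]
      simpa [Fin.val_succ] using this
    · intro k
      have := hUmap k.val k.isLt
      simpa [Fin.coe_castSucc, Fin.val_succ] using this
end

section
/- Let x be an N×N complex matrix and let a_1 ≥ a_2 ≥ ⋯ ≥ a_m be positive integers with a_1 + ⋯ + a_m = N. Suppose rank(x^k) = N − (a_1 + ⋯ + a_k) for every 1 ≤ k ≤ m, and suppose {0} = U_0 ⊆ U_1 ⊆ ⋯ ⊆ U_m = ℂ^N are linear subspaces with dim U_k = a_1 + ⋯ + a_k and x(U_k) ⊆ U_{k−1} for all 1 ≤ k ≤ m. Then U_k = Ker(x^k) for every 1 ≤ k ≤ m. In particular, such a flag is unique. -/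
/-- for an N×N complex matrix `x` and positive integers
`a 0 ≥ a 1 ≥ ⋯ ≥ a (m-1)` summing to `N` with `rank (x^k) = N - (a_1 + ⋯ + a_k)` for all
`1 ≤ k ≤ m`, any flag `{0} = U_0 ⊆ U_1 ⊆ ⋯ ⊆ U_m = ℂ^N` with `dim U_k = a_1 + ⋯ + a_k`
and `x(U_k) ⊆ U_{k-1}` satisfies `U_k = Ker (x^k)` for `1 ≤ k ≤ m`; in particular such a
flag is unique. -/
theorem stmt10 (N m : ℕ) (hm : 1 ≤ m) (x : Matrix (Fin N) (Fin N) ℂ)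
    (a : Fin m → ℕ) (ha_pos : ∀ i, 0 < a i)
    (ha_mono : ∀ i j : Fin m, i ≤ j → a j ≤ a i)
    (ha_sum : ∑ i, a i = N)
    (hrank : ∀ k : Fin m, (x ^ ((k : ℕ) + 1)).rank = N - ∑ j ∈ Finset.Iic k, a j)
    (U : Fin (m + 1) → Submodule ℂ (Fin N → ℂ))
    (hU0 : U 0 = ⊥) (hUm : U (Fin.last m) = ⊤)
    (hUmono : ∀ k : Fin m, U k.castSucc ≤ U k.succ)
    (hUdim : ∀ k : Fin m, Module.finrank ℂ (U k.succ) = ∑ j ∈ Finset.Iic k, a j)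
    (hUx : ∀ k : Fin m, Submodule.map x.mulVecLin (U k.succ) ≤ U k.castSucc) :
    ∀ k : Fin m, U k.succ = LinearMap.ker ((x ^ ((k : ℕ) + 1)).mulVecLin) := by
  -- key: vectors in U_n are killed by x^n
  have key : ∀ n : ℕ, ∀ hn : n ≤ m, ∀ v ∈ U ⟨n, Nat.lt_succ_of_le hn⟩,
      (x ^ n).mulVecLin v = 0 := by
    intro n
    induction n with
    | zero =>
      intro hn v hv
      rw [show (⟨0, Nat.lt_succ_of_le hn⟩ : Fin (m+1)) = 0 from rfl, hU0] at hv
      simpa using hv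
    | succ n ih =>
      intro hn v hv
      have hn' : n < m := hn
      have hxv : x.mulVecLin v ∈ U (⟨n, hn'⟩ : Fin m).castSucc := by
        exact hUx ⟨n, hn'⟩ ⟨v, hv, rfl⟩
      have : x.mulVecLin v ∈ U ⟨n, Nat.lt_succ_of_le (Nat.le_of_lt hn')⟩ := by
        exact hxv
      have h0 := ih (Nat.le_of_lt hn') _ this
      rw [pow_succ, Matrix.mulVecLin_mul]
      simpa using h0
  intro k
  have hle : U k.succ ≤ LinearMap.ker ((x ^ ((k : ℕ) + 1)).mulVecLin) := by
    intro v hv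
    rw [LinearMap.mem_ker]
    exact key (k + 1) k.2 v hv
  have hSle : ∑ j ∈ Finset.Iic k, a j ≤ N := by
    rw [← ha_sum]
    exact Finset.sum_le_sum_of_subset (Finset.subset_univ _)
  have hrn := LinearMap.finrank_range_add_finrank_ker ((x ^ ((k : ℕ) + 1)).mulVecLin)
  rw [show Module.finrank ℂ (Fin N → ℂ) = N by simp] at hrn
  have hker : Module.finrank ℂ (LinearMap.ker ((x ^ ((k : ℕ) + 1)).mulVecLin)) =
      ∑ j ∈ Finset.Iic k, a j := by
    have hr : Module.finrank ℂ (LinearMap.range ((x ^ ((k : ℕ) + 1)).mulVecLin)) =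
        N - ∑ j ∈ Finset.Iic k, a j := hrank k
    omega
  exact Submodule.eq_of_le_of_finrank_eq hle ((hUdim k).trans hker.symm)
end

section
/- In the linear chain setting, set x = B_0 ∘ A_0, an endomorphism of ℂ^N. Then for every 1 ≤ k ≤ m−1 one has x^k = B_0 ∘ B_1 ∘ ⋯ ∘ B_{k−1} ∘ A_{k−1} ∘ ⋯ ∘ A_1 ∘ A_0; consequently rank(x^k) ≤ dim V_k for 1 ≤ k ≤ m−1, and x^m = 0. -/
/-- The composition `A_{k-1} ∘ ⋯ ∘ A_1 ∘ A_0 : V_0 → V_k` in the linear chain setting. -/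
noncomputable def Acomp {v : ℕ → ℕ}
    (A : (i : ℕ) → (Fin (v i) → ℂ) →ₗ[ℂ] (Fin (v (i + 1)) → ℂ)) :
    (k : ℕ) → (Fin (v 0) → ℂ) →ₗ[ℂ] (Fin (v k) → ℂ)
  | 0 => LinearMap.id
  | k + 1 => (A k).comp (Acomp A k)

/-- The composition `B_0 ∘ B_1 ∘ ⋯ ∘ B_{k-1} : V_k → V_0` in the linear chain setting. -/
noncomputable def Bcomp {v : ℕ → ℕ}
    (B : (i : ℕ) → (Fin (v (i + 1)) → ℂ) →ₗ[ℂ] (Fin (v i) → ℂ)) :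
    (k : ℕ) → (Fin (v k) → ℂ) →ₗ[ℂ] (Fin (v 0) → ℂ)
  | 0 => LinearMap.id
  | k + 1 => (Bcomp B k).comp (B k)

/-- linear chain setting: with `x = B_0 ∘ A_0 : ℂ^N → ℂ^N`, for every
`1 ≤ k ≤ m-1` one has `x^k = B_0 ∘ ⋯ ∘ B_{k-1} ∘ A_{k-1} ∘ ⋯ ∘ A_0`; consequently
`rank (x^k) ≤ dim V_k` for `1 ≤ k ≤ m-1`, and `x^m = 0`. -/
theorem stmt11 (m N : ℕ) (hm : 2 ≤ m) (hN : 1 ≤ N)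
    (v : ℕ → ℕ) (hv0 : v 0 = N) (hvm : ∀ i, m ≤ i → v i = 0)
    (A : (i : ℕ) → (Fin (v i) → ℂ) →ₗ[ℂ] (Fin (v (i + 1)) → ℂ))
    (B : (i : ℕ) → (Fin (v (i + 1)) → ℂ) →ₗ[ℂ] (Fin (v i) → ℂ))
    (hmom : ∀ i, i ≤ m - 2 → (A i).comp (B i) = (B (i + 1)).comp (A (i + 1))) :
    (∀ k, 1 ≤ k → k ≤ m - 1 →
        ((B 0).comp (A 0)) ^ k = (Bcomp B k).comp (Acomp A k)) ∧
      (∀ k, 1 ≤ k → k ≤ m - 1 →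
        Module.finrank ℂ (LinearMap.range (((B 0).comp (A 0)) ^ k)) ≤ v k) ∧
      ((B 0).comp (A 0)) ^ m = 0 := by
  set x := (B 0).comp (A 0) with hx
  have hC : ∀ k, k ≤ m - 1 → (Acomp A k).comp x = (B k).comp (Acomp A (k + 1)) := by
    intro k
    induction k with
    | zero =>
      intro _
      show LinearMap.id.comp x = (B 0).comp ((A 0).comp LinearMap.id)
      simp [hx]
    | succ k ih =>
      intro hk
      have hk2 : k ≤ m - 2 := by omega
      have ihh := ih (by omega)
      show ((A k).comp (Acomp A k)).comp x = _
      rw [LinearMap.comp_assoc, ihh, ← LinearMap.comp_assoc, hmom k hk2,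
        LinearMap.comp_assoc]
      rfl
  have hM : ∀ k, 1 ≤ k → k ≤ m → x ^ k = (Bcomp B k).comp (Acomp A k) := by
    intro k
    induction k with
    | zero => omega
    | succ k ih =>
      intro _ hk
      rcases Nat.eq_zero_or_pos k with hk0 | hk1
      · subst hk0
        show x ^ 1 = (LinearMap.id.comp (B 0)).comp ((A 0).comp LinearMap.id)
        simp [hx]
      · have ihh := ih hk1 (by omega)
        have hkm : k ≤ m - 1 := by omega
        rw [pow_succ, Module.End.mul_eq_comp, ihh, LinearMap.comp_assoc, hC k hkm,
          ← LinearMap.comp_assoc]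
        rfl
  refine ⟨fun k h1 h2 => hM k h1 (by omega), fun k h1 h2 => ?_, ?_⟩
  · rw [hM k h1 (by omega)]
    calc Module.finrank ℂ (LinearMap.range ((Bcomp B k).comp (Acomp A k)))
        ≤ Module.finrank ℂ (LinearMap.range (Bcomp B k)) :=
          Submodule.finrank_mono (LinearMap.range_comp_le_range _ _)
      _ ≤ Module.finrank ℂ (Fin (v k) → ℂ) := (Bcomp B k).finrank_range_le
      _ = v k := by simp
  · have hvm0 : v m = 0 := hvm m le_rfl
    have hA0 : Acomp A m = 0 := by
      apply LinearMap.ext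
      intro y
      funext i
      have := i.isLt
      omega
    rw [hM m (by omega) le_rfl, hA0, LinearMap.comp_zero]
end

section
/- In the linear chain setting, set x = B_0 ∘ A_0, U_0 = {0}, U_k = Ker(A_{k−1} ∘ ⋯ ∘ A_1 ∘ A_0) for 1 ≤ k ≤ m−1, and U_m = ℂ^N. Then U_0 ⊆ U_1 ⊆ ⋯ ⊆ U_m and x(U_k) ⊆ U_{k−1} for every 1 ≤ k ≤ m. If moreover every A_i (0 ≤ i ≤ m−2) is surjective, then dim U_k = N − dim V_k for every 1 ≤ k ≤ m−1. -/
open Classical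

/-- The flag `U_0 = {0}`, `U_k = Ker (A_{k-1} ∘ ⋯ ∘ A_0)` for `1 ≤ k ≤ m-1`,
`U_k = ℂ^N` for `k ≥ m` (in particular `U_m = ℂ^N`). -/
noncomputable def Uflag (m : ℕ) {v : ℕ → ℕ}
    (A : (i : ℕ) → (Fin (v i) → ℂ) →ₗ[ℂ] (Fin (v (i + 1)) → ℂ)) (k : ℕ) :
    Submodule ℂ (Fin (v 0) → ℂ) :=
  if k = 0 then ⊥ else if k ≤ m - 1 then LinearMap.ker (Acomp A k) else ⊤

/-- linear chain setting: with `x = B_0 ∘ A_0`, `U_0 = {0}`,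
`U_k = Ker (A_{k-1} ∘ ⋯ ∘ A_0)` for `1 ≤ k ≤ m-1`, and `U_m = ℂ^N`, the `U_k` form an
increasing chain and `x(U_k) ⊆ U_{k-1}` for `1 ≤ k ≤ m`; if moreover every `A_i`
(`0 ≤ i ≤ m-2`) is surjective, then `dim U_k = N - dim V_k` for `1 ≤ k ≤ m-1`. -/
theorem stmt12 (m N : ℕ) (hm : 2 ≤ m) (hN : 1 ≤ N)
    (v : ℕ → ℕ) (hv0 : v 0 = N) (hvm : ∀ i, m ≤ i → v i = 0)
    (A : (i : ℕ) → (Fin (v i) → ℂ) →ₗ[ℂ] (Fin (v (i + 1)) → ℂ))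
    (B : (i : ℕ) → (Fin (v (i + 1)) → ℂ) →ₗ[ℂ] (Fin (v i) → ℂ))
    (hmom : ∀ i, i ≤ m - 2 → (A i).comp (B i) = (B (i + 1)).comp (A (i + 1))) :
    (∀ k, k < m → Uflag m A k ≤ Uflag m A (k + 1)) ∧
      (∀ k, k < m →
        Submodule.map ((B 0).comp (A 0)) (Uflag m A (k + 1)) ≤ Uflag m A k) ∧
      ((∀ i, i ≤ m - 2 → Function.Surjective (A i)) →
        ∀ k, 1 ≤ k → k ≤ m - 1 → Module.finrank ℂ (Uflag m A k) = N - v k) := by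
  -- key intertwining identity
  have key : ∀ k, k ≤ m - 1 →
      (Acomp A k).comp ((B 0).comp (A 0)) = (B k).comp (Acomp A (k + 1)) := by
    intro k
    induction k with
    | zero =>
      intro _
      ext u
      simp [Acomp]
    | succ k ih =>
      intro hk
      have hk' : k ≤ m - 1 := by omega
      have hk2 : k ≤ m - 2 := by omega
      have ihk := ih hk'
      show ((A k).comp (Acomp A k)).comp ((B 0).comp (A 0)) = _
      calc ((A k).comp (Acomp A k)).comp ((B 0).comp (A 0))
          = (A k).comp ((Acomp A k).comp ((B 0).comp (A 0))) := by
            rw [LinearMap.comp_assoc]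
        _ = (A k).comp ((B k).comp (Acomp A (k + 1))) := by rw [ihk]
        _ = ((A k).comp (B k)).comp (Acomp A (k + 1)) := by
            rw [LinearMap.comp_assoc]
        _ = ((B (k + 1)).comp (A (k + 1))).comp (Acomp A (k + 1)) := by
            rw [hmom k hk2]
        _ = (B (k + 1)).comp (Acomp A (k + 2)) := by
            rw [LinearMap.comp_assoc]; rfl
  refine ⟨?_, ?_, ?_⟩
  · -- increasing chain
    intro k hk
    by_cases hk0 : k = 0
    · subst hk0; simp [Uflag]
    · have hk1 : k ≤ m - 1 := by omega
      by_cases hk2 : k + 1 ≤ m - 1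
      · simp only [Uflag, if_neg hk0, if_pos hk1, if_neg (by omega : ¬ k + 1 = 0),
          if_pos hk2]
        intro u hu
        simp only [LinearMap.mem_ker] at hu ⊢
        show (A k) (Acomp A k u) = 0
        rw [hu, map_zero]
      · simp only [Uflag, if_neg hk0, if_pos hk1, if_neg (by omega : ¬ k + 1 = 0),
          if_neg hk2]
        exact le_top
  · -- x maps U_{k+1} into U_k
    intro k hk
    rintro _ ⟨u, hu, rfl⟩
    -- first: Acomp (k+1) u = 0
    have h0 : Acomp A (k + 1) u = 0 := by
      by_cases hk2 : k + 1 ≤ m - 1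
      · simp only [Uflag, if_neg (by omega : ¬ k + 1 = 0), if_pos hk2,
          LinearMap.mem_ker] at hu
        exact hu
      · have hvk : v (k + 1) = 0 := hvm (k + 1) (by omega)
        exact funext fun i => absurd i.isLt (by omega)
    have hcomp : Acomp A k (((B 0).comp (A 0)) u) = 0 := by
      have := congrArg (fun f => f u) (key k (by omega))
      simp only [LinearMap.comp_apply] at this
      rw [show Acomp A k (((B 0).comp (A 0)) u)
            = Acomp A k ((B 0) ((A 0) u)) from rfl, this, h0, map_zero]
    by_cases hk0 : k = 0
    · subst hk0
      simp only [Uflag, if_pos rfl, Submodule.mem_bot]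
      exact hcomp
    · have hk1 : k ≤ m - 1 := by omega
      simp only [Uflag, if_neg hk0, if_pos hk1, LinearMap.mem_ker]
      exact hcomp
  · -- dimension count
    intro hsurj k hk1 hk2
    have hs : ∀ j, j ≤ m - 1 → Function.Surjective (Acomp A j) := by
      intro j
      induction j with
      | zero => intro _; exact Function.surjective_id
      | succ j ih =>
        intro hj
        exact (hsurj j (by omega)).comp (ih (by omega))
    have hUeq : Uflag m A k = LinearMap.ker (Acomp A k) := by
      simp only [Uflag, if_neg (by omega : ¬ k = 0), if_pos hk2]
    rw [hUeq]
    have h1 := LinearMap.finrank_range_add_finrank_ker (Acomp A k)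
    have hr : LinearMap.range (Acomp A k) = ⊤ :=
      LinearMap.range_eq_top.mpr (hs k hk2)
    rw [hr, finrank_top] at h1
    have hdom : Module.finrank ℂ (Fin (v 0) → ℂ) = N := by
      rw [Module.finrank_fin_fun, hv0]
    have hcod : Module.finrank ℂ (Fin (v k) → ℂ) = v k := Module.finrank_fin_fun ℂ
    rw [hdom, hcod] at h1
    omega
end

section
/- Let p and q be positive integers with p > q, and let f be a polynomial in the pq entries of a q×p complex matrix. If the evaluation of f is nonzero at every surjective matrix A (i.e., at every q×p complex matrix of rank q), then f is a (nonzero) constant polynomial. Equivalently, every nonconstant polynomial on the space of q×p complex matrices with p > q has a zero at some surjective matrix. -/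
/-!
Let `π` be an irreducible factor of `f`. For every column `j` there is a `q × q` minor avoiding
column `j`; it is a nonzero polynomial, and wherever it does not vanish the matrix is surjective,
so `f` does not vanish there either. By the Nullstellensatz some power of the minor is divisible
by `f`, hence by the prime `π`, so `π` divides the minor itself and involves no variable of
column `j`. Thus `π` involves no variable at all, i.e. it is a constant: a contradiction. So `f` has no irreducible factor, and is a constant.
-/

open MvPolynomial

theorem exists_injective_notMem_range {m n : Type*} [Fintype m] [Fintype n] [DecidableEq n]
    (h : Fintype.card m < Fintype.card n) (j : n) :
    ∃ e : m → n, Function.Injective e ∧ j ∉ Set.range e := by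
  obtain ⟨e⟩ : Nonempty (m ↪ {k // k ≠ j}) := Function.Embedding.nonempty_of_card_le (by
    rw [Fintype.card_subtype_compl, Fintype.card_subtype_eq]; omega)
  exact ⟨Subtype.val ∘ e, Subtype.val_injective.comp e.injective, fun ⟨k, hk⟩ => (e k).2 hk⟩

namespace MvPolynomial

theorem vars_subset_of_dvd {σ R : Type*} [CommSemiring R] [NoZeroDivisors R]
    {p q : MvPolynomial σ R} (h : p ∣ q) (hq : q ≠ 0) : p.vars ⊆ q.vars := by
  obtain ⟨r, rfl⟩ := h
  intro i hi
  rw [mem_vars_iff_degreeOf_ne_zero] at hi ⊢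
  rw [degreeOf_mul_eq (left_ne_zero_of_mul hq) (right_ne_zero_of_mul hq)]
  omega

variable {σ K : Type*} [Field K] [IsAlgClosed K] [Finite σ]

theorem _root_.Prime.dvd_of_forall_eval_eq_zero {f g π : MvPolynomial σ K} (hπ : Prime π)
    (hπf : π ∣ f) (hg : ∀ x, eval x f = 0 → eval x g = 0) : π ∣ g := by
  have hrad : g ∈ (Ideal.span {f}).radical := by
    rw [← vanishingIdeal_zeroLocus_eq_radical (K := K)]
    intro x hx
    exact hg x (hx f (Ideal.subset_span rfl))
  obtain ⟨n, hn⟩ := hrad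
  exact hπ.dvd_of_dvd_pow (hπf.trans (Ideal.mem_span_singleton.mp hn))

theorem eq_C_of_forall_exists_vanishing_notMem_vars (f : MvPolynomial σ K)
    (h : ∀ v, ∃ g : MvPolynomial σ K, g ≠ 0 ∧ v ∉ g.vars ∧ ∀ x, eval x f = 0 → eval x g = 0) :
    f = C (f.coeff 0) := by
  rw [← vars_eq_empty_iff_eq_C]
  by_cases hf0 : f = 0
  · rw [hf0, vars_0]
  by_cases hfu : IsUnit f
  · obtain ⟨r, -, rfl⟩ := isUnit_iff_eq_C_of_isReduced.mp hfu
    exact vars_C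
  exfalso
  obtain ⟨π, hπ, hπf⟩ := WfDvdMonoid.exists_irreducible_factor hfu hf0
  have hπ_vars : π.vars = ∅ := Finset.eq_empty_of_forall_notMem fun v hv => by
    obtain ⟨g, hg0, hvg, hg⟩ := h v
    exact hvg (vars_subset_of_dvd (hπ.prime.dvd_of_forall_eval_eq_zero hπf hg) hg0 hv)
  rw [vars_eq_empty_iff_eq_C] at hπ_vars
  refine hπ.not_isUnit (hπ_vars ▸ (Ne.isUnit fun h0 => hπ.ne_zero ?_).map C)
  rw [hπ_vars, h0, map_zero]

end MvPolynomial

namespace Matrix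

variable {m n : Type*} [Fintype m] [DecidableEq m]

theorem surjective_mulVecLin_of_det_submatrix_ne_zero {K : Type*} [Field K] [Fintype n]
    [DecidableEq n] (A : Matrix m n K) (e : m → n) (h : (A.submatrix id e).det ≠ 0) :
    Function.Surjective A.mulVecLin := by
  have hAP : A * (1 : Matrix n n K).submatrix id e = A.submatrix id e := by
    simpa using mul_submatrix_one (Equiv.refl n) e A
  intro y
  refine ⟨((1 : Matrix n n K).submatrix id e * (A.submatrix id e)⁻¹) *ᵥ y, ?_⟩
  rw [mulVecLin_apply, mulVec_mulVec, ← Matrix.mul_assoc, hAP,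
    mul_nonsing_inv _ h.isUnit, one_mulVec]

variable {R : Type*} [CommRing R]

theorem eval_rename_det_mvPolynomialX (e : m → n) (x : m × n → R) :
    eval x (rename (Prod.map id e) (mvPolynomialX m m R).det)
      = ((of fun i j => x (i, j)).submatrix id e).det := by
  rw [eval_rename, eval_det_mvPolynomialX]
  rfl

theorem rename_det_mvPolynomialX_ne_zero [Nontrivial R] {e : m → n} (he : Function.Injective e) :
    rename (Prod.map id e) (mvPolynomialX m m R).det ≠ 0 :=
  (map_ne_zero_iff _ (rename_injective _ (Function.injective_id.prodMap he))).mpr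
    (det_mvPolynomialX_ne_zero m R)

theorem notMem_vars_rename_det_mvPolynomialX {e : m → n} {j : n} (hj : j ∉ Set.range e) (i : m) :
    (i, j) ∉ (rename (Prod.map id e) (mvPolynomialX m m R).det).vars := fun hmem => by
  obtain ⟨w, -, hw⟩ := mem_vars_rename _ _ hmem
  exact hj ⟨w.2, congrArg Prod.snd hw⟩

theorem exists_minor_notMem_vars_of_card_lt {K : Type*} [Field K] [Fintype n] [DecidableEq n]
    (h : Fintype.card m < Fintype.card n) (j : n) :
    ∃ g : MvPolynomial (m × n) K, g ≠ 0 ∧ (∀ i, (i, j) ∉ g.vars) ∧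
      ∀ x, eval x g ≠ 0 → Function.Surjective (of fun i k => x (i, k)).mulVecLin := by
  obtain ⟨e, he, hj⟩ := exists_injective_notMem_range h j
  refine ⟨_, rename_det_mvPolynomialX_ne_zero he, notMem_vars_rename_det_mvPolynomialX hj,
    fun x hx => surjective_mulVecLin_of_det_submatrix_ne_zero _ e ?_⟩
  rwa [← eval_rename_det_mvPolynomialX]

end Matrix

theorem stmt14_general (p q : ℕ) (hpq : q < p)
    (f : MvPolynomial (Fin q × Fin p) ℂ)
    (hf : ∀ A : Matrix (Fin q) (Fin p) ℂ, Function.Surjective A.mulVecLin →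
      MvPolynomial.eval (fun ij => A ij.1 ij.2) f ≠ 0) :
    ∃ c : ℂ, c ≠ 0 ∧ f = MvPolynomial.C c := by
  have hminor := Matrix.exists_minor_notMem_vars_of_card_lt (K := ℂ)
    (show Fintype.card (Fin q) < Fintype.card (Fin p) by simpa using hpq)
  have hfC : f = C (f.coeff 0) := by
    refine eq_C_of_forall_exists_vanishing_notMem_vars f fun ⟨i, j⟩ => ?_
    obtain ⟨g, hg0, hvars, hsurj⟩ := hminor j
    refine ⟨g, hg0, hvars i, fun x hfx => ?_⟩
    by_contra hgx
    exact hf _ (hsurj x hgx) hfx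
  obtain ⟨g, hg0, -, hsurj⟩ := hminor ⟨0, by omega⟩
  obtain ⟨x, hgx⟩ : ∃ x, eval x g ≠ 0 := by
    by_contra! hg
    exact hg0 (MvPolynomial.funext (by simpa using hg))
  refine ⟨f.coeff 0, fun hc => hf _ (hsurj x hgx) ?_, hfC⟩
  rw [hfC, hc, map_zero, map_zero]

/-- if `q < p` and a polynomial `f` in the entries of a `q×p` complex matrix
is nonzero at every surjective matrix (rank `q` matrix), then `f` is a nonzero constant. -/
theorem stmt14 (p q : ℕ) (hq : 0 < q) (hpq : q < p)
    (f : MvPolynomial (Fin q × Fin p) ℂ)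
    (hf : ∀ A : Matrix (Fin q) (Fin p) ℂ, Function.Surjective A.mulVecLin →
      MvPolynomial.eval (fun ij => A ij.1 ij.2) f ≠ 0) :
    ∃ c : ℂ, c ≠ 0 ∧ f = MvPolynomial.C c :=
  stmt14_general p q hpq f hf
end
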